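/- arXiv:math-ph/9909002 — 9 statements merged into one kernel-verified Lean document; each statement's English description precedes it below -/
import Mathlib

section
/- Let A be a commutative ring, let p ≥ 1, and let α be a function from the subsets of ℕ_p = {1,…,p} to A with α(∅) = 1. Then there exists a unique function α_c from the subsets of ℕ_p to A with α_c(∅) = 0 such that for every nonempty Q ⊆ ℕ_p one has α(Q) = Σ_{J ⊆ Q, min Q ∈ J} α_c(J) · α(Q ∖ J). -/
noncomputable def connAux {A : Type*} [CommRing A] {p : ℕ}
    (α : Finset (Fin p) → A) : Finset (Fin p) → A :=
  Finset.strongInduction fun Q ih =>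
    if h : Q.Nonempty then
      α Q - ∑ J ∈ (Q.powerset.filter (fun J => Q.min' h ∈ J ∧ J ≠ Q)).attach,
        ih J.1 (by
          have hJ := J.2
          simp only [Finset.mem_filter, Finset.mem_powerset] at hJ
          exact Finset.ssubset_iff_subset_ne.mpr ⟨hJ.1, hJ.2.2⟩) * α (Q \ J.1)
    else 0

lemma connAux_eq {A : Type*} [CommRing A] {p : ℕ}
    (α : Finset (Fin p) → A) (Q : Finset (Fin p)) (h : Q.Nonempty) :
    connAux α Q = α Q - ∑ J ∈ Q.powerset.filter (fun J => Q.min' h ∈ J ∧ J ≠ Q),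
      connAux α J * α (Q \ J) := by
  rw [connAux, Finset.strongInduction_eq, dif_pos h]
  congr 1
  exact Finset.sum_attach _ fun J => connAux α J * α (Q \ J)

lemma connAux_empty {A : Type*} [CommRing A] {p : ℕ}
    (α : Finset (Fin p) → A) : connAux α ∅ = 0 := by
  rw [connAux, Finset.strongInduction_eq, dif_neg (by simp)]

lemma filter_split {p : ℕ} (Q : Finset (Fin p)) (h : Q.Nonempty) :
    Q.powerset.filter (fun J => Q.min' h ∈ J) =
      insert Q (Q.powerset.filter (fun J => Q.min' h ∈ J ∧ J ≠ Q)) := by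
  ext J
  simp only [Finset.mem_filter, Finset.mem_powerset, Finset.mem_insert]
  constructor
  · rintro ⟨h1, h2⟩
    by_cases hq : J = Q
    · exact Or.inl hq
    · exact Or.inr ⟨h1, h2, hq⟩
  · rintro (rfl | ⟨h1, h2, _⟩)
    · exact ⟨le_refl _, Finset.min'_mem _ _⟩
    · exact ⟨h1, h2⟩

/-- **Existence and uniqueness of the connected part.**
Let `A` be a commutative ring, `p ≥ 1`, and `α` a function from subsets of
`ℕ_p = {1,…,p}` (formalized as `Fin p`) to `A` with `α ∅ = 1`.  Then there is a unique
function `αc` with `αc ∅ = 0` such that for every nonempty `Q ⊆ ℕ_p`,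
`α Q = ∑_{J ⊆ Q, min Q ∈ J} αc J * α (Q \ J)`. -/
theorem connected_part_exists_unique
    (A : Type*) [CommRing A] (p : ℕ) (hp : 1 ≤ p)
    (α : Finset (Fin p) → A) (hα : α ∅ = 1) :
    ∃! αc : Finset (Fin p) → A,
      αc ∅ = 0 ∧
      ∀ (Q : Finset (Fin p)) (hQ : Q.Nonempty),
        α Q = ∑ J ∈ Q.powerset.filter (fun J => Q.min' hQ ∈ J), αc J * α (Q \ J) := by
  refine ⟨connAux α, ⟨connAux_empty α, ?_⟩, ?_⟩
  · intro Q hQ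
    rw [filter_split Q hQ, Finset.sum_insert (by simp), Finset.sdiff_self, hα, mul_one,
      connAux_eq α Q hQ]
    ring
  · rintro g ⟨hg0, hg⟩
    funext Q
    induction Q using Finset.strongInduction with
    | _ Q ih =>
      by_cases h : Q.Nonempty
      · have key := hg Q h
        rw [filter_split Q h, Finset.sum_insert (by simp), Finset.sdiff_self, hα, mul_one] at key
        rw [connAux_eq α Q h]
        have : ∑ J ∈ Q.powerset.filter (fun J => Q.min' h ∈ J ∧ J ≠ Q), g J * α (Q \ J)
            = ∑ J ∈ Q.powerset.filter (fun J => Q.min' h ∈ J ∧ J ≠ Q), connAux α J * α (Q \ J) := by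
          apply Finset.sum_congr rfl
          intro J hJ
          simp only [Finset.mem_filter, Finset.mem_powerset] at hJ
          rw [ih J (Finset.ssubset_iff_subset_ne.mpr ⟨hJ.1, hJ.2.2⟩)]
        rw [← this]
        linear_combination -key
      · rw [Finset.not_nonempty_iff_eq_empty] at h
        subst h
        rw [hg0, connAux_empty]
end

section
/- Let A be a commutative ring, let p ≥ 1, and let α be a function from the subsets of ℕ_p to A with α(∅) = 1, and let α_c be its connected part. Then for every nonempty Q ⊆ ℕ_p, α(Q) equals the sum over all set partitions of Q into nonempty blocks I_1, …, I_m of the product Π_{l=1}^m α_c(I_l). (Equivalently, α(Q) = Σ_{m ≥ 1} (1/m!) Σ over ordered m-tuples (I_1,…,I_m) of pairwise disjoint nonempty sets with I_1 ∪ … ∪ I_m = Q of Π_{l=1}^m α_c(I_l).) -/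
/-- **Partition formula for the connected part.**
Let `A` be a commutative ring, `p ≥ 1`, `α` a function from subsets of `ℕ_p` (i.e. `Fin p`)
to `A` with `α ∅ = 1`, and let `αc` be its connected part, i.e. `αc ∅ = 0` and for every
nonempty `Q`, `α Q = ∑_{J ⊆ Q, min Q ∈ J} αc J * α (Q \ J)`.  Then for every nonempty
`Q ⊆ ℕ_p`, `α Q` equals the sum over all set partitions of `Q` into nonempty blocks
`I₁, …, I_m` (formalized as finite sets `P` of pairwise disjoint nonempty subsets whose
union is `Q`) of the product `∏_{I ∈ P} αc I`. -/
theorem connected_part_partition_formula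
    (A : Type*) [CommRing A] (p : ℕ) (hp : 1 ≤ p)
    (α αc : Finset (Fin p) → A) (hα : α ∅ = 1)
    (hαc0 : αc ∅ = 0)
    (hαc : ∀ (Q : Finset (Fin p)) (hQ : Q.Nonempty),
      α Q = ∑ J ∈ Q.powerset.filter (fun J => Q.min' hQ ∈ J), αc J * α (Q \ J)) :
    ∀ (Q : Finset (Fin p)), Q.Nonempty →
      α Q = ∑ P ∈ Q.powerset.powerset.filter
          (fun P : Finset (Finset (Fin p)) =>
            (∀ I ∈ P, I ≠ ∅) ∧ (∀ I ∈ P, ∀ J ∈ P, I ≠ J → I ∩ J = ∅) ∧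
            P.sup id = Q),
        ∏ I ∈ P, αc I := by
  suffices H : ∀ Q : Finset (Fin p), α Q = ∑ P ∈ Q.powerset.powerset.filter
      (fun P : Finset (Finset (Fin p)) =>
        (∀ I ∈ P, I ≠ ∅) ∧ (∀ I ∈ P, ∀ J ∈ P, I ≠ J → I ∩ J = ∅) ∧ P.sup id = Q),
      ∏ I ∈ P, αc I from fun Q _ => H Q
  intro Q
  induction Q using Finset.strongInduction with
  | _ Q IH =>
  rcases Q.eq_empty_or_nonempty with rfl | hQ
  · rw [hα, Finset.powerset_empty]
    have hfilter : (({∅} : Finset (Finset (Fin p))).powerset).filter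
        (fun P => (∀ I ∈ P, I ≠ ∅) ∧ (∀ I ∈ P, ∀ J ∈ P, I ≠ J → I ∩ J = ∅) ∧
          P.sup id = ∅) = {∅} := by
      ext P
      simp only [Finset.mem_filter, Finset.mem_powerset, Finset.mem_singleton,
        Finset.subset_singleton_iff]
      constructor
      · rintro ⟨rfl | rfl, h1, h2, h3⟩
        · rfl
        · exact absurd rfl (h1 ∅ (Finset.mem_singleton_self _))
      · rintro rfl
        exact ⟨Or.inl rfl, by simp, by simp, rfl⟩
    rw [hfilter, Finset.sum_singleton, Finset.prod_empty]
  · set m := Q.min' hQ with hm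
    have hmQ : m ∈ Q := Q.min'_mem hQ
    rw [hαc Q hQ]
    -- rewrite each α (Q \ J) using IH
    have hstep : ∀ J ∈ Q.powerset.filter (fun J => m ∈ J),
        αc J * α (Q \ J) = ∑ P' ∈ (Q \ J).powerset.powerset.filter
          (fun P : Finset (Finset (Fin p)) =>
            (∀ I ∈ P, I ≠ ∅) ∧ (∀ I ∈ P, ∀ K ∈ P, I ≠ K → I ∩ K = ∅) ∧
            P.sup id = Q \ J),
          αc J * ∏ I ∈ P', αc I := by
      intro J hJ
      rw [Finset.mem_filter, Finset.mem_powerset] at hJ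
      have hss : Q \ J ⊂ Q := Finset.sdiff_ssubset hJ.1 ⟨m, hJ.2⟩
      rw [IH _ hss, Finset.mul_sum]
    rw [Finset.sum_congr rfl hstep, Finset.sum_sigma']
    refine Finset.sum_bij' (fun x _ => insert x.1 x.2)
      (fun P _ => ⟨(P.filter (fun I => m ∈ I)).sup id, P.filter (fun I => m ∉ I)⟩)
      ?_ ?_ ?_ ?_ ?_
    · -- forward membership
      rintro ⟨J, P'⟩ hx
      rw [Finset.mem_sigma] at hx
      obtain ⟨hJ, hP'⟩ := hx
      rw [Finset.mem_filter, Finset.mem_powerset] at hJ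
      obtain ⟨hJQ, hmJ⟩ := hJ
      rw [Finset.mem_filter, Finset.mem_powerset] at hP'
      obtain ⟨hP'sub, h1, h2, h3⟩ := hP'
      have hIsub : ∀ I ∈ P', I ⊆ Q \ J := fun I hI =>
        Finset.mem_powerset.mp (hP'sub hI)
      rw [Finset.mem_filter, Finset.mem_powerset]
      refine ⟨?_, ?_, ?_, ?_⟩
      · intro I hI
        rw [Finset.mem_insert] at hI
        rcases hI with rfl | hI
        · exact Finset.mem_powerset.mpr hJQ
        · exact Finset.mem_powerset.mpr ((hIsub I hI).trans (Finset.sdiff_subset))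
      · intro I hI
        rw [Finset.mem_insert] at hI
        rcases hI with rfl | hI
        · exact Finset.ne_empty_of_mem hmJ
        · exact h1 I hI
      · intro I hI K hK hne
        rw [Finset.mem_insert] at hI hK
        have disj : ∀ I' ∈ P', J ∩ I' = ∅ := by
          intro I' hI'
          rw [← Finset.disjoint_iff_inter_eq_empty]
          exact (Finset.disjoint_sdiff.mono_right (hIsub I' hI')).symm.symm
            |>.symm |>.symm
        rcases hI with rfl | hI
        · rcases hK with rfl | hK
          · exact absurd rfl hne
          · exact disj K hK
        · rcases hK with rfl | hK
          · rw [Finset.inter_comm]; exact disj I hI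
          · exact h2 I hI K hK hne
      · rw [Finset.sup_insert, h3, id]
        exact Finset.union_sdiff_of_subset hJQ
    · -- backward membership
      intro P hP
      rw [Finset.mem_filter, Finset.mem_powerset] at hP
      obtain ⟨hPsub, h1, h2, h3⟩ := hP
      have hIQ : ∀ I ∈ P, I ⊆ Q := fun I hI => Finset.mem_powerset.mp (hPsub hI)
      obtain ⟨J₀, hJ₀P, hmJ₀⟩ : ∃ J₀ ∈ P, m ∈ J₀ := by
        have : m ∈ P.sup id := h3 ▸ hmQ
        simpa using Finset.mem_sup.mp this
      have hfilt : P.filter (fun I => m ∈ I) = {J₀} := by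
        ext I
        rw [Finset.mem_filter, Finset.mem_singleton]
        constructor
        · rintro ⟨hIP, hmI⟩
          by_contra hne
          have := h2 I hIP J₀ hJ₀P hne
          have : m ∈ I ∩ J₀ := Finset.mem_inter.mpr ⟨hmI, hmJ₀⟩
          simp_all
        · rintro rfl; exact ⟨hJ₀P, hmJ₀⟩
      rw [hfilt, Finset.sup_singleton, id]
      rw [Finset.mem_sigma]
      constructor
      · rw [Finset.mem_filter, Finset.mem_powerset]
        exact ⟨hIQ J₀ hJ₀P, hmJ₀⟩
      · rw [Finset.mem_filter, Finset.mem_powerset]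
        have hsub : ∀ I ∈ P.filter (fun I => m ∉ I), I ⊆ Q \ J₀ := by
          intro I hI
          rw [Finset.mem_filter] at hI
          obtain ⟨hIP, hmI⟩ := hI
          have hne : I ≠ J₀ := fun h => hmI (h ▸ hmJ₀)
          rw [Finset.subset_sdiff]
          exact ⟨hIQ I hIP, Finset.disjoint_iff_inter_eq_empty.mpr (h2 I hIP J₀ hJ₀P hne)⟩
        refine ⟨fun I hI => Finset.mem_powerset.mpr (hsub I hI), ?_, ?_, ?_⟩
        · intro I hI; exact h1 I (Finset.mem_filter.mp hI).1
        · intro I hI K hK hne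
          exact h2 I (Finset.mem_filter.mp hI).1 K (Finset.mem_filter.mp hK).1 hne
        · apply le_antisymm
          · exact Finset.sup_le fun I hI => hsub I hI
          · intro x hx
            rw [Finset.mem_sdiff] at hx
            obtain ⟨hxQ, hxJ₀⟩ := hx
            have : x ∈ P.sup id := h3 ▸ hxQ
            obtain ⟨I, hIP, hxI⟩ := Finset.mem_sup.mp this
            have hmI : m ∉ I := by
              intro hmI
              have : I = J₀ := by
                by_contra hne
                have h := h2 I hIP J₀ hJ₀P hne
                have : m ∈ I ∩ J₀ := Finset.mem_inter.mpr ⟨hmI, hmJ₀⟩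
                simp_all
              exact hxJ₀ (this ▸ hxI)
            exact Finset.le_sup (f := id) (Finset.mem_filter.mpr ⟨hIP, hmI⟩) hxI
    · -- left inverse
      rintro ⟨J, P'⟩ hx
      rw [Finset.mem_sigma] at hx
      obtain ⟨hJ, hP'⟩ := hx
      rw [Finset.mem_filter, Finset.mem_powerset] at hJ
      obtain ⟨hJQ, hmJ⟩ := hJ
      rw [Finset.mem_filter, Finset.mem_powerset] at hP'
      have hmI : ∀ I ∈ P', m ∉ I := by
        intro I hI hmI
        have := Finset.mem_powerset.mp (hP'.1 hI) hmI
        rw [Finset.mem_sdiff] at this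
        exact this.2 hmJ
      have e1 : (insert J P').filter (fun I => m ∈ I) = {J} := by
        rw [Finset.filter_insert, if_pos hmJ]
        rw [Finset.filter_false_of_mem hmI]
        rfl
      have e2 : (insert J P').filter (fun I => m ∉ I) = P' := by
        rw [Finset.filter_insert, if_neg (by simpa using hmJ)]
        exact Finset.filter_true_of_mem hmI
      simp [e1, e2]
    · -- right inverse
      intro P hP
      rw [Finset.mem_filter, Finset.mem_powerset] at hP
      obtain ⟨hPsub, h1, h2, h3⟩ := hP
      obtain ⟨J₀, hJ₀P, hmJ₀⟩ : ∃ J₀ ∈ P, m ∈ J₀ := by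
        have : m ∈ P.sup id := h3 ▸ hmQ
        simpa using Finset.mem_sup.mp this
      have hfilt : P.filter (fun I => m ∈ I) = {J₀} := by
        ext I
        rw [Finset.mem_filter, Finset.mem_singleton]
        constructor
        · rintro ⟨hIP, hmI⟩
          by_contra hne
          have := h2 I hIP J₀ hJ₀P hne
          have : m ∈ I ∩ J₀ := Finset.mem_inter.mpr ⟨hmI, hmJ₀⟩
          simp_all
        · rintro rfl; exact ⟨hJ₀P, hmJ₀⟩
      dsimp only
      rw [hfilt, Finset.sup_singleton, id]
      have := Finset.filter_union_filter_not_eq (fun I => m ∈ I) P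
      rw [hfilt] at this
      rw [← this]
      ext I; simp only [Finset.mem_insert, Finset.mem_union, Finset.mem_singleton, Finset.mem_filter]; tauto
    · -- values
      rintro ⟨J, P'⟩ hx
      rw [Finset.mem_sigma] at hx
      obtain ⟨hJ, hP'⟩ := hx
      rw [Finset.mem_filter, Finset.mem_powerset] at hJ
      rw [Finset.mem_filter, Finset.mem_powerset] at hP'
      have hJP' : J ∉ P' := by
        intro h
        have := Finset.mem_powerset.mp (hP'.1 h) hJ.2
        rw [Finset.mem_sdiff] at this
        exact this.2 hJ.2
      rw [Finset.prod_insert hJP']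
end

section
/- Let A be a commutative ring, p ≥ 1, and suppose given elements b_q ∈ A for each q ∈ ℕ_p and elements a_{qq'} ∈ A for each unordered pair {q,q'} of distinct elements of ℕ_p. Define α(Q) = (Π_{q ∈ Q} b_q) · Π_{{q,q'} ⊆ Q, q ≠ q'} (1 + a_{qq'}) for every Q ⊆ ℕ_p (so α(∅) = 1), and let α_c be its connected part. Then for every nonempty Q ⊆ ℕ_p, α_c(Q) = (Π_{q ∈ Q} b_q) · Σ_{G ∈ G_c(Q)} Π_{{q,q'} ∈ G} a_{qq'}, the sum running over all connected graphs on the vertex set Q. -/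
open scoped Classical

/-- `G` is a graph on the vertex set `S`: a finite set of edges, each edge an unordered
pair of distinct vertices of `S`. -/
def IsGraphOn {p : ℕ} (S : Finset (Fin p)) (G : Finset (Sym2 (Fin p))) : Prop :=
  ∀ e ∈ G, ¬ e.IsDiag ∧ ∀ v ∈ e, v ∈ S

/-- `G` connects `S`: any two vertices of `S` are joined by a path of edges of `G`. -/
def ConnectsOn {p : ℕ} (S : Finset (Fin p)) (G : Finset (Sym2 (Fin p))) : Prop :=
  ∀ x ∈ S, ∀ y ∈ S, Relation.ReflTransGen (fun a b => s(a, b) ∈ G) x y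

namespace CPAux

open Finset

variable {p : ℕ}

/-- Edges within `Q`. -/
noncomputable def ES (Q : Finset (Fin p)) : Finset (Sym2 (Fin p)) :=
  Finset.univ.filter (fun e : Sym2 (Fin p) => ¬ e.IsDiag ∧ ∀ v ∈ e, v ∈ Q)

lemma mem_ES {Q : Finset (Fin p)} {e : Sym2 (Fin p)} :
    e ∈ ES Q ↔ ¬ e.IsDiag ∧ ∀ v ∈ e, v ∈ Q := by
  simp [ES]

lemma isGraphOn_iff {Q : Finset (Fin p)} {G : Finset (Sym2 (Fin p))} :
    IsGraphOn Q G ↔ G ⊆ ES Q := by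
  constructor
  · intro h e he; exact mem_ES.2 (h e he)
  · intro h e he; exact mem_ES.1 (h he)

lemma ES_empty : ES (∅ : Finset (Fin p)) = ∅ := by
  rw [Finset.eq_empty_iff_forall_notMem]
  intro e he
  rcases mem_ES.1 he with ⟨_, hv⟩
  induction e using Sym2.ind with
  | _ x y => exact absurd (hv x (by simp)) (by simp)

/-- connected component of `m` within `Q` under edge set `G`. -/
noncomputable def comp (G : Finset (Sym2 (Fin p))) (Q : Finset (Fin p)) (m : Fin p) :
    Finset (Fin p) :=
  Q.filter (fun x => Relation.ReflTransGen (fun u v => s(u, v) ∈ G) m x)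

lemma rel_symm (G : Finset (Sym2 (Fin p))) :
    Symmetric (fun u v => s(u, v) ∈ G) := by
  intro u v h; rwa [Sym2.eq_swap]

lemma mem_comp {G : Finset (Sym2 (Fin p))} {Q : Finset (Fin p)} {m x : Fin p} :
    x ∈ comp G Q m ↔ x ∈ Q ∧ Relation.ReflTransGen (fun u v => s(u, v) ∈ G) m x := by
  simp [comp]

lemma comp_subset {G : Finset (Sym2 (Fin p))} {Q : Finset (Fin p)} {m : Fin p} :
    comp G Q m ⊆ Q := Finset.filter_subset _ _

lemma mem_comp_self {G : Finset (Sym2 (Fin p))} {Q : Finset (Fin p)} {m : Fin p}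
    (hm : m ∈ Q) : m ∈ comp G Q m :=
  mem_comp.2 ⟨hm, Relation.ReflTransGen.refl⟩

/-- closure of the component under adjacency -/
lemma comp_closed {G : Finset (Sym2 (Fin p))} {Q : Finset (Fin p)} {m : Fin p}
    (hG : G ⊆ ES Q) {x y : Fin p} (hx : x ∈ comp G Q m) (hxy : s(x, y) ∈ G) :
    y ∈ comp G Q m := by
  rcases mem_comp.1 hx with ⟨hxQ, hpath⟩
  refine mem_comp.2 ⟨?_, hpath.tail hxy⟩
  exact (mem_ES.1 (hG hxy)).2 y (by simp)

section decomp

variable {G : Finset (Sym2 (Fin p))} {Q : Finset (Fin p)} {m : Fin p}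

/-- Any vertex reachable from `m` in `G` lies in the component and is reachable using only
edges within the component. -/
lemma path_in_comp (hG : G ⊆ ES Q) (hm : m ∈ Q) {x : Fin p}
    (h : Relation.ReflTransGen (fun u v => s(u, v) ∈ G) m x) :
    x ∈ comp G Q m ∧
      Relation.ReflTransGen
        (fun u v => s(u, v) ∈ G.filter (fun e => ∀ v ∈ e, v ∈ comp G Q m)) m x := by
  induction h with
  | refl => exact ⟨mem_comp_self hm, Relation.ReflTransGen.refl⟩
  | tail hb hbc ih =>
    rcases ih with ⟨hbJ, hpath⟩
    have hcJ := comp_closed hG hbJ hbc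
    refine ⟨hcJ, hpath.tail ?_⟩
    refine Finset.mem_filter.2 ⟨hbc, ?_⟩
    intro v hv
    rcases Sym2.mem_iff.1 hv with rfl | rfl
    · exact hbJ
    · exact hcJ

lemma connectsOn_comp (hG : G ⊆ ES Q) (hm : m ∈ Q) :
    ConnectsOn (comp G Q m) (G.filter (fun e => ∀ v ∈ e, v ∈ comp G Q m)) := by
  intro x hx y hy
  have hx' := (path_in_comp hG hm (mem_comp.1 hx).2).2
  have hy' := (path_in_comp hG hm (mem_comp.1 hy).2).2
  exact Relation.ReflTransGen.trans
    ((@Relation.ReflTransGen.symmetric _ _ ⟨fun _ _ h => rel_symm _ h⟩).symm _ _ hx') hy'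

/-- Every edge of `G` is within the component or within its complement. -/
lemma edge_split (hG : G ⊆ ES Q) {e : Sym2 (Fin p)} (he : e ∈ G) :
    (∀ v ∈ e, v ∈ comp G Q m) ∨ (∀ v ∈ e, v ∈ Q \ comp G Q m) := by
  induction e using Sym2.ind with
  | _ x y =>
    have hxQ : x ∈ Q := (mem_ES.1 (hG he)).2 x (by simp)
    have hyQ : y ∈ Q := (mem_ES.1 (hG he)).2 y (by simp)
    by_cases hx : x ∈ comp G Q m
    · left
      have hy : y ∈ comp G Q m := comp_closed hG hx he
      intro v hv; rcases Sym2.mem_iff.1 hv with rfl | rfl <;> assumption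
    · right
      have hy : y ∉ comp G Q m := by
        intro hy
        exact hx (comp_closed hG hy (by rwa [Sym2.eq_swap]))
      intro v hv; rcases Sym2.mem_iff.1 hv with rfl | rfl <;>
        simp [Finset.mem_sdiff, *]

end decomp


section ring

variable {A : Type*} [CommRing A] (a : Sym2 (Fin p) → A)

lemma exists_mem_edge (e : Sym2 (Fin p)) : ∃ v, v ∈ e := by
  induction e using Sym2.ind with
  | _ x y => exact ⟨x, by simp⟩

lemma ES_mono {Q R : Finset (Fin p)} (h : Q ⊆ R) : ES Q ⊆ ES R := by
  intro e he
  rcases mem_ES.1 he with ⟨h1, h2⟩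
  exact mem_ES.2 ⟨h1, fun v hv => h (h2 v hv)⟩

/-- Connected graphs on `Q`. -/
noncomputable def CG (Q : Finset (Fin p)) : Finset (Finset (Sym2 (Fin p))) :=
  (ES Q).powerset.filter (fun G => ConnectsOn Q G)

lemma prod_one_add (S : Finset (Sym2 (Fin p))) :
    ∏ e ∈ S, (1 + a e) = ∑ G ∈ S.powerset, ∏ e ∈ G, a e := by
  calc ∏ e ∈ S, (1 + a e) = ∏ e ∈ S, (a e + 1) := by simp [add_comm]
  _ = ∑ G ∈ S.powerset, (∏ e ∈ G, a e) * ∏ e ∈ S \ G, 1 := Finset.prod_add _ _ _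
  _ = _ := by simp

lemma graphs_disjoint {J K : Finset (Fin p)} (hJK : Disjoint J K)
    {G₁ G₂ : Finset (Sym2 (Fin p))} (hG₁ : G₁ ⊆ ES J) (hG₂ : G₂ ⊆ ES K) :
    Disjoint G₁ G₂ := by
  rw [Finset.disjoint_left]
  intro e he1 he2
  obtain ⟨v, hv⟩ := exists_mem_edge e
  have h1 : v ∈ J := (mem_ES.1 (hG₁ he1)).2 v hv
  have h2 : v ∈ K := (mem_ES.1 (hG₂ he2)).2 v hv
  exact Finset.disjoint_left.1 hJK h1 h2

lemma comp_union {Q J : Finset (Fin p)} {m : Fin p} (hJQ : J ⊆ Q) (hm : m ∈ J)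
    {G₁ G₂ : Finset (Sym2 (Fin p))} (hG₁ : G₁ ⊆ ES J) (hG₂ : G₂ ⊆ ES (Q \ J))
    (hconn : ConnectsOn J G₁) : comp (G₁ ∪ G₂) Q m = J := by
  apply Finset.Subset.antisymm
  · intro x hx
    rcases mem_comp.1 hx with ⟨hxQ, hpath⟩
    clear hx hxQ
    induction hpath with
    | refl => exact hm
    | tail hb hbc ih =>
      rcases Finset.mem_union.1 hbc with h | h
      · exact (mem_ES.1 (hG₁ h)).2 _ (Sym2.mem_mk_right _ _)
      · exact absurd ((Finset.mem_sdiff.1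
          ((mem_ES.1 (hG₂ h)).2 _ (Sym2.mem_mk_left _ _))).2) (not_not.2 ih)
  · intro x hx
    exact mem_comp.2 ⟨hJQ hx,
      Relation.ReflTransGen.mono (fun _ _ h => Finset.mem_union_left _ h) m x (hconn m hm x hx)⟩

lemma filter_union_left {Q J : Finset (Fin p)} {G₁ G₂ : Finset (Sym2 (Fin p))}
    (hG₁ : G₁ ⊆ ES J) (hG₂ : G₂ ⊆ ES (Q \ J)) :
    (G₁ ∪ G₂).filter (fun e => ∀ v ∈ e, v ∈ J) = G₁ := by
  ext e
  simp only [Finset.mem_filter, Finset.mem_union]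
  constructor
  · rintro ⟨h | h, hJ⟩
    · exact h
    · obtain ⟨v, hv⟩ := exists_mem_edge e
      exact absurd (hJ v hv)
        ((Finset.mem_sdiff.1 ((mem_ES.1 (hG₂ h)).2 v hv)).2)
  · intro h
    exact ⟨Or.inl h, (mem_ES.1 (hG₁ h)).2⟩

lemma filter_union_right {Q J : Finset (Fin p)} {G₁ G₂ : Finset (Sym2 (Fin p))}
    (hG₁ : G₁ ⊆ ES J) (hG₂ : G₂ ⊆ ES (Q \ J)) :
    (G₁ ∪ G₂).filter (fun e => ∀ v ∈ e, v ∈ Q \ J) = G₂ := by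
  ext e
  simp only [Finset.mem_filter, Finset.mem_union]
  constructor
  · rintro ⟨h | h, hJ⟩
    · obtain ⟨v, hv⟩ := exists_mem_edge e
      exact absurd (Finset.mem_sdiff.1 (hJ v hv)).2
        (not_not.2 ((mem_ES.1 (hG₁ h)).2 v hv))
    · exact h
  · intro h
    exact ⟨Or.inr h, (mem_ES.1 (hG₂ h)).2⟩

lemma filter_union_eq_self {Q : Finset (Fin p)} {m : Fin p} {G : Finset (Sym2 (Fin p))}
    (hG : G ⊆ ES Q) {J : Finset (Fin p)} (hJ : comp G Q m = J) :
    G.filter (fun e => ∀ v ∈ e, v ∈ J) ∪ G.filter (fun e => ∀ v ∈ e, v ∈ Q \ J) = G := by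
  apply Finset.Subset.antisymm
  · exact Finset.union_subset (Finset.filter_subset _ _) (Finset.filter_subset _ _)
  · intro e he
    have := edge_split (m := m) hG he
    rw [hJ] at this
    rcases this with h | h
    · exact Finset.mem_union_left _ (Finset.mem_filter.2 ⟨he, h⟩)
    · exact Finset.mem_union_right _ (Finset.mem_filter.2 ⟨he, h⟩)

lemma fiber_eq {Q J : Finset (Fin p)} {m : Fin p} (hJQ : J ⊆ Q) (hm : m ∈ J) :
    ∑ G ∈ (ES Q).powerset.filter (fun G => comp G Q m = J), ∏ e ∈ G, a e
      = (∑ G₁ ∈ CG J, ∏ e ∈ G₁, a e) *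
        ∑ G₂ ∈ (ES (Q \ J)).powerset, ∏ e ∈ G₂, a e := by
  rw [Finset.sum_mul_sum, ← Finset.sum_product']
  refine Finset.sum_nbij' (i := fun G => (G.filter (fun e => ∀ v ∈ e, v ∈ J),
      G.filter (fun e => ∀ v ∈ e, v ∈ Q \ J)))
    (j := fun P => P.1 ∪ P.2) ?_ ?_ ?_ ?_ ?_
  · -- hi
    intro G hG
    rw [Finset.mem_filter, Finset.mem_powerset] at hG
    obtain ⟨hGQ, hJeq⟩ := hG
    rw [Finset.mem_product]
    constructor
    · rw [CG, Finset.mem_filter, Finset.mem_powerset]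
      constructor
      · intro e he
        rw [Finset.mem_filter] at he
        exact mem_ES.2 ⟨(mem_ES.1 (hGQ he.1)).1, he.2⟩
      · have := connectsOn_comp hGQ (hJQ hm)
        rwa [hJeq] at this
    · rw [Finset.mem_powerset]
      intro e he
      rw [Finset.mem_filter] at he
      exact mem_ES.2 ⟨(mem_ES.1 (hGQ he.1)).1, he.2⟩
  · -- hj
    rintro ⟨G₁, G₂⟩ hP
    rw [Finset.mem_product] at hP
    obtain ⟨h1, h2⟩ := hP
    rw [CG, Finset.mem_filter, Finset.mem_powerset] at h1
    rw [Finset.mem_powerset] at h2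
    rw [Finset.mem_filter, Finset.mem_powerset]
    exact ⟨Finset.union_subset (h1.1.trans (ES_mono hJQ))
        (h2.trans (ES_mono Finset.sdiff_subset)),
      comp_union hJQ hm h1.1 h2 h1.2⟩
  · -- left_inv
    intro G hG
    rw [Finset.mem_filter, Finset.mem_powerset] at hG
    exact filter_union_eq_self hG.1 hG.2
  · -- right_inv
    rintro ⟨G₁, G₂⟩ hP
    rw [Finset.mem_product] at hP
    obtain ⟨h1, h2⟩ := hP
    rw [CG, Finset.mem_filter, Finset.mem_powerset] at h1
    rw [Finset.mem_powerset] at h2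
    simp only [Prod.mk.injEq]
    exact ⟨filter_union_left h1.1 h2, filter_union_right h1.1 h2⟩
  · -- products agree
    intro G hG
    rw [Finset.mem_filter, Finset.mem_powerset] at hG
    have hunion := filter_union_eq_self hG.1 hG.2
    have hdisj : Disjoint (G.filter (fun e => ∀ v ∈ e, v ∈ J))
        (G.filter (fun e => ∀ v ∈ e, v ∈ Q \ J)) := by
      refine graphs_disjoint (J := J) (K := Q \ J) (Finset.disjoint_sdiff)
        (fun e he => ?_) (fun e he => ?_) <;>
      · rw [Finset.mem_filter] at he
        exact mem_ES.2 ⟨(mem_ES.1 (hG.1 he.1)).1, he.2⟩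
    dsimp only
    rw [← Finset.prod_union hdisj, hunion]

lemma expand {Q : Finset (Fin p)} {m : Fin p} (hm : m ∈ Q) :
    ∏ e ∈ ES Q, (1 + a e)
      = ∑ J ∈ Q.powerset.filter (fun J => m ∈ J),
          (∑ G₁ ∈ CG J, ∏ e ∈ G₁, a e) *
          ∑ G₂ ∈ (ES (Q \ J)).powerset, ∏ e ∈ G₂, a e := by
  rw [prod_one_add]
  rw [← Finset.sum_fiberwise_of_maps_to (g := fun G => comp G Q m)
      (t := Q.powerset.filter (fun J => m ∈ J))
      (fun G _ => Finset.mem_filter.2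
        ⟨Finset.mem_powerset.2 comp_subset, mem_comp_self hm⟩)]
  refine Finset.sum_congr rfl (fun J hJ => ?_)
  rw [Finset.mem_filter, Finset.mem_powerset] at hJ
  exact fiber_eq a hJ.1 hJ.2

end ring

end CPAux

/-- **Connected parts of exponentiated pair interactions are sums over connected graphs.**
Given `b_q ∈ A` for each vertex and `a_e ∈ A` for each edge `e` (a function on unordered
pairs), define `α(Q) = (∏_{q ∈ Q} b_q) ∏_{edges e within Q} (1 + a_e)` (so `α ∅ = 1`),
and let `αc` be its connected part.  Then for every nonempty `Q ⊆ ℕ_p`,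
`αc Q = (∏_{q ∈ Q} b_q) ∑_{G connected graph on Q} ∏_{e ∈ G} a_e`. -/
theorem connected_part_eq_connected_graph_sum
    (A : Type*) [CommRing A] (p : ℕ) (hp : 1 ≤ p)
    (b : Fin p → A) (a : Sym2 (Fin p) → A)
    (α αc : Finset (Fin p) → A)
    (hα : ∀ Q : Finset (Fin p),
      α Q = (∏ q ∈ Q, b q) *
        ∏ e ∈ Finset.univ.filter
            (fun e : Sym2 (Fin p) => ¬ e.IsDiag ∧ ∀ v ∈ e, v ∈ Q),
          (1 + a e))
    (hαc0 : αc ∅ = 0)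
    (hαc : ∀ (Q : Finset (Fin p)) (hQ : Q.Nonempty),
      α Q = ∑ J ∈ Q.powerset.filter (fun J => Q.min' hQ ∈ J), αc J * α (Q \ J)) :
    ∀ (Q : Finset (Fin p)), Q.Nonempty →
      αc Q = (∏ q ∈ Q, b q) *
        ∑ G ∈ Finset.univ.filter
            (fun G : Finset (Sym2 (Fin p)) => IsGraphOn Q G ∧ ConnectsOn Q G),
          ∏ e ∈ G, a e := by
  classical
  have hES : ∀ Q : Finset (Fin p), (Finset.univ.filter
      (fun e : Sym2 (Fin p) => ¬ e.IsDiag ∧ ∀ v ∈ e, v ∈ Q)) = CPAux.ES Q := by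
    intro Q; ext e; simp [CPAux.ES]
  have hα' : ∀ Q, α Q = (∏ q ∈ Q, b q) * ∏ e ∈ CPAux.ES Q, (1 + a e) := by
    intro Q; rw [hα Q, hES]
  have hα0 : α ∅ = 1 := by rw [hα' ∅]; simp [CPAux.ES_empty]
  have hCG : ∀ Q : Finset (Fin p), Finset.univ.filter
      (fun G : Finset (Sym2 (Fin p)) => IsGraphOn Q G ∧ ConnectsOn Q G) = CPAux.CG Q := by
    intro Q; ext G
    simp [CPAux.CG, CPAux.isGraphOn_iff]
  set β : Finset (Fin p) → A :=
    fun J => (∏ q ∈ J, b q) * ∑ G ∈ CPAux.CG J, ∏ e ∈ G, a e with hβ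
  have hβrec : ∀ (Q : Finset (Fin p)) (hQ : Q.Nonempty),
      α Q = ∑ J ∈ Q.powerset.filter (fun J => Q.min' hQ ∈ J), β J * α (Q \ J) := by
    intro Q hQ
    rw [hα' Q, CPAux.expand a (Q.min'_mem hQ), Finset.mul_sum]
    refine Finset.sum_congr rfl (fun J hJ => ?_)
    rw [Finset.mem_filter, Finset.mem_powerset] at hJ
    rw [hβ]
    rw [hα' (Q \ J), ← CPAux.prod_one_add]
    rw [← Finset.prod_sdiff hJ.1]
    ring
  intro Q
  induction Q using Finset.strongInduction with
  | _ Q ih =>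
    intro hQ
    rw [hCG Q]
    show αc Q = β Q
    have h1 := hαc Q hQ
    have h2 := hβrec Q hQ
    have hQmem : Q ∈ Q.powerset.filter (fun J => Q.min' hQ ∈ J) :=
      Finset.mem_filter.2 ⟨Finset.mem_powerset.2 (le_refl Q), Q.min'_mem hQ⟩
    rw [← Finset.add_sum_erase _ _ hQmem] at h1 h2
    rw [Finset.sdiff_self, hα0, mul_one] at h1 h2
    have hsum : ∑ J ∈ (Q.powerset.filter (fun J => Q.min' hQ ∈ J)).erase Q, αc J * α (Q \ J)
        = ∑ J ∈ (Q.powerset.filter (fun J => Q.min' hQ ∈ J)).erase Q, β J * α (Q \ J) := by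
      refine Finset.sum_congr rfl (fun J hJ => ?_)
      rw [Finset.mem_erase, Finset.mem_filter, Finset.mem_powerset] at hJ
      obtain ⟨hne, hsub, hmin⟩ := hJ
      have hJQ : J ⊂ Q := ssubset_of_subset_of_ne hsub hne
      have hJc := ih J hJQ ⟨Q.min' hQ, hmin⟩
      rw [hCG J] at hJc
      rw [hJc]
    rw [hsum] at h1
    exact add_right_cancel (h1.symm.trans h2)
end

section
/- (Penrose) For every p ≥ 1 there exists a map H* : T(ℕ_p) → {graphs on ℕ_p} such that T ∩ H*(T) = ∅ for every tree T ∈ T(ℕ_p), and the set G_c(ℕ_p) of connected graphs on ℕ_p is the disjoint union over T ∈ T(ℕ_p) of the sets {H ∪ T : H ⊆ H*(T)}. Equivalently: every graph of the form T ∪ H with H ⊆ H*(T) is connected, and for every connected graph G on ℕ_p there exists exactly one tree T ∈ T(ℕ_p) with T ⊆ G and G ∖ T ⊆ H*(T). -/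
open scoped Classical

/-- A tree on `ℕ_p`: a connected graph on the full vertex set `ℕ_p` (i.e. `Fin p`) with
exactly `p - 1` edges. -/
def IsTree {p : ℕ} (T : Finset (Sym2 (Fin p))) : Prop :=
  IsGraphOn Finset.univ T ∧ ConnectsOn Finset.univ T ∧ T.card = p - 1

namespace PenroseAux

open Finset

variable {p : ℕ}

/-- connectivity relation of an edge set -/
def Con (G : Finset (Sym2 (Fin p))) (a b : Fin p) : Prop :=
  Relation.ReflTransGen (fun a b => s(a, b) ∈ G) a b

lemma Con.refl {G : Finset (Sym2 (Fin p))} {a : Fin p} : Con G a a :=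
  Relation.ReflTransGen.refl

lemma con_symm {G : Finset (Sym2 (Fin p))} {a b : Fin p} (h : Con G a b) : Con G b a :=
  by
    induction h with
    | refl => exact Relation.ReflTransGen.refl
    | tail _ h₂ ih => exact Relation.ReflTransGen.head (by rwa [Sym2.eq_swap]) ih

lemma Con.trans {G : Finset (Sym2 (Fin p))} {a b c : Fin p}
    (h : Con G a b) (h' : Con G b c) : Con G a c :=
  Relation.ReflTransGen.trans h h'

lemma con_mono {G G' : Finset (Sym2 (Fin p))} (hGG : G ⊆ G') {a b : Fin p}
    (h : Con G a b) : Con G' a b :=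
  by
    induction h with
    | refl => exact Relation.ReflTransGen.refl
    | tail _ h₂ ih => exact Relation.ReflTransGen.tail ih (hGG h₂)

lemma con_single {G : Finset (Sym2 (Fin p))} {a b : Fin p} (h : s(a, b) ∈ G) :
    Con G a b := Relation.ReflTransGen.single h

/-- any walk from a point where Q holds to one where it fails crosses Q -/
lemma cross0 {G : Finset (Sym2 (Fin p))} {Q : Fin p → Prop} {a b : Fin p}
    (h : Con G a b) (ha : Q a) (hb : ¬ Q b) :
    ∃ x y, s(x, y) ∈ G ∧ Q x ∧ ¬ Q y := by
  induction h with
  | refl => exact absurd ha hb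
  | tail h₁ h₂ ih =>
    rename_i c d
    by_cases hc : Q c
    · exact ⟨c, d, h₂, hc, hb⟩
    · exact ih hc

/-- detour lemma: if the endpoints of `e` stay connected after erasing it, then
erasing `e` does not affect connectivity -/
lemma detour {G : Finset (Sym2 (Fin p))} {x y : Fin p} {e : Sym2 (Fin p)}
    (hexy : e = s(x, y)) (hd : Con (G.erase e) x y) {a b : Fin p} (h : Con G a b) :
    Con (G.erase e) a b := by
  induction h with
  | refl => exact Con.refl
  | tail h₁ h₂ ih =>
    rename_i c d
    by_cases hg : s(c, d) = e
    · rcases Sym2.eq_iff.mp (hg.trans hexy) with ⟨rfl, rfl⟩ | ⟨rfl, rfl⟩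
      · exact ih.trans hd
      · exact ih.trans (con_symm hd)
    · exact ih.tail (Finset.mem_erase.mpr ⟨hg, h₂⟩)

/-- after erasing an edge, every vertex reachable from `x` is still reachable
from one of the two endpoints -/
lemma two_sided {G : Finset (Sym2 (Fin p))} {x y v : Fin p}
    (h : Con G x v) :
    Con (G.erase s(x, y)) x v ∨ Con (G.erase s(x, y)) y v := by
  induction h with
  | refl => exact Or.inl Con.refl
  | tail h₁ h₂ ih =>
    rename_i c d
    by_cases hg : s(c, d) = s(x, y)
    · rcases Sym2.eq_iff.mp hg with ⟨rfl, rfl⟩ | ⟨rfl, rfl⟩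
      · exact Or.inr Con.refl
      · exact Or.inl Con.refl
    · rcases ih with h | h
      · exact Or.inl (h.tail (Finset.mem_erase.mpr ⟨hg, h₂⟩))
      · exact Or.inr (h.tail (Finset.mem_erase.mpr ⟨hg, h₂⟩))

lemma exists_min_connecting {G : Finset (Sym2 (Fin p))} {a b : Fin p} (h : Con G a b) :
    ∃ T ⊆ G, Con T a b ∧ ∀ g ∈ T, ¬ Con (T.erase g) a b := by
  classical
  have hne : ((G.powerset).filter (fun X => Con X a b)).Nonempty :=
    ⟨G, by simp [h]⟩
  obtain ⟨T, hT, hmin⟩ := Finset.exists_min_image _ Finset.card hne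
  rw [Finset.mem_filter, Finset.mem_powerset] at hT
  refine ⟨T, hT.1, hT.2, fun g hg hcon => ?_⟩
  have : T.card ≤ (T.erase g).card := by
    refine hmin _ ?_
    rw [Finset.mem_filter, Finset.mem_powerset]
    exact ⟨(Finset.erase_subset _ _).trans hT.1, hcon⟩
  have := Finset.card_erase_lt_of_mem hg
  omega

lemma reach_endpoint {G : Finset (Sym2 (Fin p))} {a b : Fin p} {g : Sym2 (Fin p)}
    (h : Con G a b) :
    Con (G.erase g) a b ∨ ∃ u v, g = s(u, v) ∧ Con (G.erase g) a u := by
  induction h with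
  | refl => exact Or.inl Con.refl
  | tail h₁ h₂ ih =>
    rename_i c d
    rcases ih with h | h
    · by_cases hg : s(c, d) = g
      · exact Or.inr ⟨c, d, hg.symm, h⟩
      · exact Or.inl (h.tail (Finset.mem_erase.mpr ⟨hg, h₂⟩))
    · exact Or.inr h

/-- key crossing lemma: a connection from `a` (where `Q`) to `b` (where `¬ Q`)
contains an edge `s(x,y)` crossing `Q` such that `a` reaches `x` and `y` reaches `b`
avoiding that edge. -/
lemma cross {G : Finset (Sym2 (Fin p))} {Q : Fin p → Prop} {a b : Fin p}
    (h : Con G a b) (ha : Q a) (hb : ¬ Q b) :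
    ∃ x y, s(x, y) ∈ G ∧ ¬ (Q x ↔ Q y) ∧
      Con (G.erase s(x, y)) a x ∧ Con (G.erase s(x, y)) y b := by
  obtain ⟨T, hTG, hcon, hmin⟩ := exists_min_connecting h
  obtain ⟨u, v, huv, hQu, hQv⟩ := cross0 hcon ha hb
  -- a reaches an endpoint of s(u,v) in T minus that edge
  have h1 : Con (T.erase s(u, v)) a u ∨ Con (T.erase s(u, v)) a v := by
    rcases reach_endpoint (g := s(u, v)) hcon with h' | ⟨u', v', heq, h'⟩
    · exact absurd h' (hmin _ huv)
    · rcases Sym2.eq_iff.mp heq with ⟨rfl, rfl⟩ | ⟨rfl, rfl⟩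
      · exact Or.inl h'
      · exact Or.inr h'
  have h2 : Con (T.erase s(u, v)) b u ∨ Con (T.erase s(u, v)) b v := by
    rcases reach_endpoint (g := s(u, v)) (con_symm hcon) with h' | ⟨u', v', heq, h'⟩
    · exact absurd (con_symm h') (hmin _ huv)
    · rcases Sym2.eq_iff.mp heq with ⟨rfl, rfl⟩ | ⟨rfl, rfl⟩
      · exact Or.inl h'
      · exact Or.inr h'
  have hQuv : ¬ (Q u ↔ Q v) := by tauto
  have hsub : T.erase s(u, v) ⊆ G.erase s(u, v) := Finset.erase_subset_erase _ hTG
  rcases h1 with h1 | h1 <;> rcases h2 with h2 | h2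
  · exact absurd (h1.trans (con_symm h2)) (hmin _ huv)
  · exact ⟨u, v, hTG huv, hQuv, con_mono hsub h1, con_mono hsub (con_symm h2)⟩
  · refine ⟨v, u, by rw [Sym2.eq_swap]; exact hTG huv, by tauto, ?_, ?_⟩
    · rw [Sym2.eq_swap]; exact con_mono hsub h1
    · rw [Sym2.eq_swap]; exact con_mono hsub (con_symm h2)
  · exact absurd (h1.trans (con_symm h2)) (hmin _ huv)


/-- growth of a partial spanning tree -/
lemma grow (G : Finset (Sym2 (Fin p))) (hG : ∀ e ∈ G, ¬ e.IsDiag)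
    (hc : ∀ x y : Fin p, Con G x y) :
    ∀ k (S : Finset (Fin p)) (T : Finset (Sym2 (Fin p))), S.Nonempty →
      (∀ e ∈ T, ∀ v ∈ e, v ∈ S) → (∀ x ∈ S, ∀ y ∈ S, Con T x y) →
      T ⊆ G → T.card + 1 = S.card → (Finset.univ \ S).card = k →
      ∃ T', T' ⊆ G ∧ IsTree T' := by
  intro k
  induction k with
  | zero =>
    intro S T hSne hTS hconn hTG hcard hk
    have hSuniv : S = Finset.univ := by
      have := Finset.card_eq_zero.mp hk
      have : ∀ x : Fin p, x ∈ S := by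
        intro x
        by_contra hx
        have : x ∈ Finset.univ \ S := Finset.mem_sdiff.mpr ⟨Finset.mem_univ x, hx⟩
        simp_all
      exact Finset.eq_univ_iff_forall.mpr this
    refine ⟨T, hTG, ⟨fun e he => ⟨hG e (hTG he), fun v _ => Finset.mem_univ v⟩, ?_, ?_⟩⟩
    · intro x _ y _
      exact hconn x (hSuniv ▸ Finset.mem_univ x) y (hSuniv ▸ Finset.mem_univ y)
    · have : S.card = p := by rw [hSuniv]; simp
      omega
  | succ k ih =>
    intro S T hSne hTS hconn hTG hcard hk
    obtain ⟨v, hv⟩ : (Finset.univ \ S).Nonempty := by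
      rw [← Finset.card_pos, hk]; omega
    have hvS : v ∉ S := (Finset.mem_sdiff.mp hv).2
    obtain ⟨s, hs⟩ := hSne
    obtain ⟨x, y, hxy, hxS, hyS⟩ := cross0 (Q := (· ∈ S)) (hc s v) hs hvS
    have hnotmem : s(x, y) ∉ T := fun h => hyS (hTS _ h y (Sym2.mem_mk_right x y))
    refine ih (insert y S) (insert s(x, y) T) ⟨s, Finset.mem_insert_of_mem hs⟩
      ?_ ?_ ?_ ?_ ?_
    · intro e he u hu
      rcases Finset.mem_insert.mp he with rfl | he
      · rcases Sym2.mem_iff.mp hu with rfl | rfl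
        · exact Finset.mem_insert_of_mem hxS
        · exact Finset.mem_insert_self _ _
      · exact Finset.mem_insert_of_mem (hTS e he u hu)
    · -- connectivity on insert y S
      have hstep : Con (insert s(x, y) T) x y :=
        con_single (Finset.mem_insert_self _ _)
      have key : ∀ u ∈ insert y S, Con (insert s(x, y) T) x u := by
        intro u hu
        rcases Finset.mem_insert.mp hu with rfl | hu
        · exact hstep
        · exact con_mono (Finset.subset_insert _ _) (hconn x hxS u hu)
      intro u hu w hw
      exact (con_symm (key u hu)).trans (key w hw)
    · intro e he
      rcases Finset.mem_insert.mp he with rfl | he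
      · exact hxy
      · exact hTG he
    · rw [Finset.card_insert_of_notMem hnotmem, Finset.card_insert_of_notMem hyS]
      omega
    · have heq : Finset.univ \ insert y S = (Finset.univ \ S).erase y := by
        ext u
        simp only [Finset.mem_sdiff, Finset.mem_univ, true_and, Finset.mem_insert,
          Finset.mem_erase, not_or]
      have hy' : y ∈ Finset.univ \ S := Finset.mem_sdiff.mpr ⟨Finset.mem_univ y, hyS⟩
      rw [heq, Finset.card_erase_of_mem hy', hk]
      omega

lemma exists_spanning_tree (hp : 1 ≤ p) (G : Finset (Sym2 (Fin p)))
    (hG : ∀ e ∈ G, ¬ e.IsDiag) (hc : ∀ x y : Fin p, Con G x y) :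
    ∃ T, T ⊆ G ∧ IsTree T := by
  refine grow G hG hc _ {⟨0, hp⟩} ∅ ⟨_, Finset.mem_singleton_self _⟩ (by simp)
    ?_ (Finset.empty_subset _) (by simp) rfl
  intro x hx y hy
  rw [Finset.mem_singleton] at hx hy
  subst hx; subst hy; exact Con.refl

/-- lower bound on the number of edges of a connected graph -/
lemma conn_card (G : Finset (Sym2 (Fin p))) (hG : ∀ e ∈ G, ¬ e.IsDiag)
    (hc : ∀ x y : Fin p, Con G x y) : p - 1 ≤ G.card := by
  rcases Nat.eq_zero_or_pos p with rfl | hp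
  · simp
  · obtain ⟨T, hTG, hT⟩ := exists_spanning_tree hp G hG hc
    calc p - 1 = T.card := hT.2.2.symm
    _ ≤ G.card := Finset.card_le_card hTG

/-- removing an edge of a tree disconnects its endpoints -/
lemma tree_erase_not_con {T : Finset (Sym2 (Fin p))} (hT : IsTree T)
    {e : Sym2 (Fin p)} (he : e ∈ T) {x y : Fin p} (hexy : e = s(x, y)) :
    ¬ Con (T.erase e) x y := by
  intro hcon
  have hxy : x ≠ y := by
    have := (hT.1 e he).1
    rw [hexy] at this
    exact fun h => this (by simp [h])
  have hp2 : 2 ≤ p := by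
    have : 1 < Fintype.card (Fin p) := Fintype.one_lt_card_iff_nontrivial.mpr ⟨⟨x, y, hxy⟩⟩
    simp at this; omega
  have hcall : ∀ u w : Fin p, Con (T.erase e) u w := fun u w =>
    detour hexy hcon (hT.2.1 u (Finset.mem_univ u) w (Finset.mem_univ w))
  have hbound := conn_card (T.erase e)
    (fun f hf => (hT.1 f (Finset.mem_of_mem_erase hf)).1) hcall
  rw [Finset.card_erase_of_mem he, hT.2.2] at hbound
  omega


/-- swapping an edge of a tree along a cut gives a tree -/
lemma tree_swap {T : Finset (Sym2 (Fin p))} (hT : IsTree T) {e : Sym2 (Fin p)}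
    (he : e ∈ T) {x y : Fin p} (hexy : e = s(x, y)) {a b : Fin p} (hab : a ≠ b)
    (hncon : ¬ Con (T.erase e) a b) : IsTree (insert s(a, b) (T.erase e)) := by
  subst hexy
  have hxy : x ≠ y := by
    have := (hT.1 _ he).1
    exact fun h => this (by simp [h])
  have hp2 : 2 ≤ p := by
    have : 1 < Fintype.card (Fin p) := Fintype.one_lt_card_iff_nontrivial.mpr ⟨⟨x, y, hxy⟩⟩
    simp at this; omega
  set E := T.erase s(x, y) with hE
  set N := insert s(a, b) E with hN
  have hsub : E ⊆ N := Finset.subset_insert _ _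
  have hsides : ∀ v : Fin p, Con E x v ∨ Con E y v := fun v =>
    two_sided (hT.2.1 x (Finset.mem_univ x) v (Finset.mem_univ v))
  have hedge : Con N a b := con_single (Finset.mem_insert_self _ _)
  have hxyN : Con N x y := by
    rcases hsides a with ha' | ha' <;> rcases hsides b with hb' | hb'
    · exact absurd ((con_symm ha').trans hb') hncon
    · exact (con_mono hsub ha').trans (hedge.trans (con_mono hsub (con_symm hb')))
    · exact (con_mono hsub hb').trans ((con_symm hedge).trans (con_mono hsub (con_symm ha')))
    · exact absurd ((con_symm ha').trans hb') hncon
  have key : ∀ v : Fin p, Con N x v := by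
    intro v
    rcases hsides v with h | h
    · exact con_mono hsub h
    · exact hxyN.trans (con_mono hsub h)
  have habE : s(a, b) ∉ E := fun h => hncon (con_single h)
  refine ⟨?_, ?_, ?_⟩
  · intro f hf
    rcases Finset.mem_insert.mp hf with rfl | hf
    · exact ⟨by simpa using hab, fun v _ => Finset.mem_univ v⟩
    · exact ⟨(hT.1 f (Finset.mem_of_mem_erase hf)).1, fun v _ => Finset.mem_univ v⟩
  · intro u _ v _
    exact (con_symm (key u)).trans (key v)
  · rw [hN, Finset.card_insert_of_notMem habE, hE, Finset.card_erase_of_mem he, hT.2.2]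
    omega

/-- edge weights : an injection into ℕ -/
noncomputable def w : Sym2 (Fin p) → ℕ := fun e => (Fintype.equivFin (Sym2 (Fin p)) e : ℕ)

lemma w_inj : Function.Injective (w (p := p)) := fun e f h =>
  (Fintype.equivFin (Sym2 (Fin p))).injective (Fin.val_injective h)

/-- total weight of an edge set -/
noncomputable def W (S : Finset (Sym2 (Fin p))) : ℕ := ∑ e ∈ S, 2 ^ w e

/-- the spanning trees of `G` -/
noncomputable def sptrees (G : Finset (Sym2 (Fin p))) : Finset (Finset (Sym2 (Fin p))) :=
  (G.powerset).filter (fun T => IsTree T)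

lemma mem_sptrees {G T : Finset (Sym2 (Fin p))} :
    T ∈ sptrees G ↔ T ⊆ G ∧ IsTree T := by
  simp [sptrees, Finset.mem_filter, Finset.mem_powerset]

/-- minimum spanning tree -/
noncomputable def mst (G : Finset (Sym2 (Fin p))) : Finset (Sym2 (Fin p)) :=
  if h : (sptrees G).Nonempty then (Finset.exists_min_image (sptrees G) W h).choose
  else ∅

lemma mst_spec {G : Finset (Sym2 (Fin p))} (h : (sptrees G).Nonempty) :
    mst G ∈ sptrees G ∧ ∀ T ∈ sptrees G, W (mst G) ≤ W T := by
  rw [mst, dif_pos h]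
  exact (Finset.exists_min_image (sptrees G) W h).choose_spec

lemma eq_erase_of_card {X T : Finset (Sym2 (Fin p))} (h : T ⊆ X)
    (hc : T.card + 1 = X.card) : ∃ g ∈ X, g ∉ T ∧ T = X.erase g := by
  have h1 : (X \ T).card = 1 := by rw [Finset.card_sdiff_of_subset h]; omega
  obtain ⟨g, hg⟩ := Finset.card_eq_one.mp h1
  have hgmem : g ∈ X \ T := hg ▸ Finset.mem_singleton_self g
  rw [Finset.mem_sdiff] at hgmem
  refine ⟨g, hgmem.1, hgmem.2, ?_⟩
  ext t
  rw [Finset.mem_erase]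
  constructor
  · exact fun ht => ⟨fun hteq => hgmem.2 (hteq ▸ ht), h ht⟩
  · rintro ⟨htg, htX⟩
    by_contra htT
    have : t ∈ X \ T := Finset.mem_sdiff.mpr ⟨htX, htT⟩
    rw [hg, Finset.mem_singleton] at this
    exact htg this

/-- two spanning trees of a `p`-edge set with equal weight coincide -/
lemma eq_of_W_eq {X T₁ T₂ : Finset (Sym2 (Fin p))} (h₁ : T₁ ⊆ X) (h₂ : T₂ ⊆ X)
    (hc₁ : T₁.card + 1 = X.card) (hc₂ : T₂.card + 1 = X.card) (hW : W T₁ = W T₂) :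
    T₁ = T₂ := by
  obtain ⟨g₁, hg₁X, hg₁, rfl⟩ := eq_erase_of_card h₁ hc₁
  obtain ⟨g₂, hg₂X, hg₂, rfl⟩ := eq_erase_of_card h₂ hc₂
  have e₁ : ∑ e ∈ X.erase g₁, 2 ^ w e + 2 ^ w g₁ = ∑ e ∈ X, 2 ^ w e :=
    Finset.sum_erase_add X (fun e => 2 ^ w e) hg₁X
  have e₂ : ∑ e ∈ X.erase g₂, 2 ^ w e + 2 ^ w g₂ = ∑ e ∈ X, 2 ^ w e :=
    Finset.sum_erase_add X (fun e => 2 ^ w e) hg₂X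
  simp only [W] at hW
  have hpow : (2 : ℕ) ^ w g₁ = 2 ^ w g₂ := by omega
  have : g₁ = g₂ := w_inj (Nat.pow_right_injective (le_refl 2) hpow)
  rw [this]

/-- the Penrose map -/
noncomputable def Hstar (T : Finset (Sym2 (Fin p))) : Finset (Sym2 (Fin p)) :=
  Finset.univ.filter (fun e => ¬ e.IsDiag ∧ e ∉ T ∧ mst (insert e T) = T)

lemma mem_Hstar {T e} :
    e ∈ Hstar (p := p) T ↔ ¬ e.IsDiag ∧ e ∉ T ∧ mst (insert e T) = T := by
  simp [Hstar]

end PenroseAux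

/-- **Penrose's lemma.**  For every `p ≥ 1` there is a map `H*` from trees on `ℕ_p` to
graphs on `ℕ_p` such that `T ∩ H*(T) = ∅` for every tree `T`, every graph `T ∪ H` with
`H ⊆ H*(T)` is a connected graph on `ℕ_p`, and every connected graph `G` on `ℕ_p` admits
exactly one tree `T` with `T ⊆ G` and `G \ T ⊆ H*(T)`; i.e. the set of connected graphs
on `ℕ_p` is the disjoint union over trees `T` of the sets `{H ∪ T : H ⊆ H*(T)}`. -/
theorem penrose_lemma (p : ℕ) (hp : 1 ≤ p) :
    ∃ Hstar : Finset (Sym2 (Fin p)) → Finset (Sym2 (Fin p)),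
      (∀ T : Finset (Sym2 (Fin p)), IsTree T →
        IsGraphOn Finset.univ (Hstar T) ∧ T ∩ Hstar T = ∅) ∧
      (∀ T : Finset (Sym2 (Fin p)), IsTree T → ∀ H ⊆ Hstar T,
        IsGraphOn Finset.univ (H ∪ T) ∧ ConnectsOn Finset.univ (H ∪ T)) ∧
      (∀ G : Finset (Sym2 (Fin p)),
        IsGraphOn Finset.univ G → ConnectsOn Finset.univ G →
        ∃! T : Finset (Sym2 (Fin p)), IsTree T ∧ T ⊆ G ∧ G \ T ⊆ Hstar T) := by
    classical
  refine ⟨PenroseAux.Hstar, fun T _ => ⟨?_, ?_⟩, fun T hT H hH => ⟨?_, ?_⟩,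
    fun G hG hGc => ?_⟩
  · exact fun e he => ⟨(PenroseAux.mem_Hstar.mp he).1, fun v _ => Finset.mem_univ v⟩
  · apply Finset.eq_empty_of_forall_notMem
    intro e he
    rw [Finset.mem_inter] at he
    exact (PenroseAux.mem_Hstar.mp he.2).2.1 he.1
  · intro e he
    rcases Finset.mem_union.mp he with he' | he'
    · exact ⟨(PenroseAux.mem_Hstar.mp (hH he')).1, fun v _ => Finset.mem_univ v⟩
    · exact hT.1 e he'
  · intro x hx y hy
    exact PenroseAux.con_mono Finset.subset_union_right (hT.2.1 x hx y hy)
  · -- main part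
    have hGc' : ∀ x y : Fin p, PenroseAux.Con G x y :=
      fun x y => hGc x (Finset.mem_univ x) y (Finset.mem_univ y)
    have hGd : ∀ e ∈ G, ¬ e.IsDiag := fun e he => (hG e he).1
    have hne : (PenroseAux.sptrees G).Nonempty := by
      obtain ⟨T, h1, h2⟩ := PenroseAux.exists_spanning_tree hp G hGd hGc'
      exact ⟨T, PenroseAux.mem_sptrees.mpr ⟨h1, h2⟩⟩
    obtain ⟨hmem₀, hmin₀⟩ := PenroseAux.mst_spec hne
    rw [PenroseAux.mem_sptrees] at hmem₀
    obtain ⟨hT₀G, hT₀⟩ := hmem₀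
    set T₀ := PenroseAux.mst G with hT₀def
    refine ⟨T₀, ⟨hT₀, hT₀G, ?_⟩, ?_⟩
    · -- G \ T₀ ⊆ Hstar T₀
      intro e he
      rw [Finset.mem_sdiff] at he
      obtain ⟨heG, heT₀⟩ := he
      rw [PenroseAux.mem_Hstar]
      refine ⟨hGd e heG, heT₀, ?_⟩
      set X := insert e T₀ with hXdef
      have hXG : X ⊆ G := Finset.insert_subset_iff.mpr ⟨heG, hT₀G⟩
      have hT₀X : T₀ ∈ PenroseAux.sptrees X :=
        PenroseAux.mem_sptrees.mpr ⟨Finset.subset_insert _ _, hT₀⟩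
      have hneX : (PenroseAux.sptrees X).Nonempty := ⟨T₀, hT₀X⟩
      obtain ⟨hmemX, hminX⟩ := PenroseAux.mst_spec hneX
      rw [PenroseAux.mem_sptrees] at hmemX
      have h1 : PenroseAux.W T₀ ≤ PenroseAux.W (PenroseAux.mst X) :=
        hmin₀ _ (PenroseAux.mem_sptrees.mpr ⟨hmemX.1.trans hXG, hmemX.2⟩)
      have h2 : PenroseAux.W (PenroseAux.mst X) ≤ PenroseAux.W T₀ := hminX _ hT₀X
      have hXcard : X.card = T₀.card + 1 := Finset.card_insert_of_notMem heT₀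
      refine PenroseAux.eq_of_W_eq hmemX.1 (Finset.subset_insert _ _) ?_ ?_
        (le_antisymm h2 h1)
      · rw [hmemX.2.2.2, hXcard, hT₀.2.2]
      · rw [hXcard]
    · -- uniqueness
      rintro T ⟨hTtree, hTG, hTH⟩
      by_contra hne'
      have hcards : T.card = p - 1 := hTtree.2.2
      have hnsub : ¬ T₀ ⊆ T := by
        intro hsub
        exact hne' ((Finset.eq_of_subset_of_card_le hsub
          (by rw [hcards, hT₀.2.2])).symm)
      obtain ⟨e, heT₀, heT⟩ := Finset.not_subset.mp hnsub
      have heG : e ∈ G := hT₀G heT₀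
      have heH : e ∈ PenroseAux.Hstar T := hTH (Finset.mem_sdiff.mpr ⟨heG, heT⟩)
      have hloc : PenroseAux.mst (insert e T) = T := (PenroseAux.mem_Hstar.mp heH).2.2
      have hndiag : ¬ e.IsDiag := (hT₀.1 e heT₀).1
      obtain ⟨⟨a, b⟩, rfl⟩ := e.exists_rep
      have hab : a ≠ b := fun h => hndiag (by simp [h])
      -- the cut of T₀ at s(a,b)
      have hQa : PenroseAux.Con (T₀.erase s(a, b)) a a := PenroseAux.Con.refl
      have hQb : ¬ PenroseAux.Con (T₀.erase s(a, b)) a b :=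
        PenroseAux.tree_erase_not_con hT₀ heT₀ rfl
      have hconT : PenroseAux.Con T a b :=
        hTtree.2.1 a (Finset.mem_univ a) b (Finset.mem_univ b)
      obtain ⟨x, y, hfT, hQxy, hax, hyb⟩ :=
        PenroseAux.cross (Q := fun v => PenroseAux.Con (T₀.erase s(a, b)) a v)
          hconT hQa hQb
      have hxy : x ≠ y := by rintro rfl; exact hQxy Iff.rfl
      have hfe : s(x, y) ≠ s(a, b) := fun h => heT (show s(a, b) ∈ T from h ▸ hfT)
      have hnxy : ¬ PenroseAux.Con (T₀.erase s(a, b)) x y := fun hcon =>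
        hQxy ⟨fun hx => hx.trans hcon, fun hy => hy.trans (PenroseAux.con_symm hcon)⟩
      have hfT₀ : s(x, y) ∉ T₀ := fun hf =>
        hnxy (PenroseAux.con_single (Finset.mem_erase.mpr ⟨hfe, hf⟩))
      -- the swapped tree T₂ inside G
      have hT₂ : IsTree (insert s(x, y) (T₀.erase s(a, b))) :=
        PenroseAux.tree_swap hT₀ heT₀ rfl hxy hnxy
      have hT₂G : insert s(x, y) (T₀.erase s(a, b)) ⊆ G :=
        Finset.insert_subset_iff.mpr ⟨hTG hfT, (Finset.erase_subset _ _).trans hT₀G⟩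
      have h2le : PenroseAux.W T₀ ≤ PenroseAux.W (insert s(x, y) (T₀.erase s(a, b))) :=
        hmin₀ _ (PenroseAux.mem_sptrees.mpr ⟨hT₂G, hT₂⟩)
      have hfE : s(x, y) ∉ T₀.erase s(a, b) := fun h => hfT₀ (Finset.mem_of_mem_erase h)
      have hs₂ : PenroseAux.W (insert s(x, y) (T₀.erase s(a, b)))
          = 2 ^ PenroseAux.w s(x, y) + PenroseAux.W (T₀.erase s(a, b)) := by
        simp only [PenroseAux.W]
        rw [Finset.sum_insert hfE]
      have hs₂' : PenroseAux.W (T₀.erase s(a, b)) + 2 ^ PenroseAux.w s(a, b)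
          = PenroseAux.W T₀ :=
        Finset.sum_erase_add T₀ (fun e => 2 ^ PenroseAux.w e) heT₀
      have hwewf : 2 ^ PenroseAux.w s(a, b) ≤ 2 ^ PenroseAux.w s(x, y) := by omega
      -- the swapped tree T₁ inside insert s(a,b) T
      have hnab : ¬ PenroseAux.Con (T.erase s(x, y)) a b := fun hcon =>
        PenroseAux.tree_erase_not_con hTtree hfT rfl
          ((PenroseAux.con_symm hax).trans (hcon.trans (PenroseAux.con_symm hyb)))
      have hT₁ : IsTree (insert s(a, b) (T.erase s(x, y))) :=
        PenroseAux.tree_swap hTtree hfT rfl hab hnab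
      have hT₁X : insert s(a, b) (T.erase s(x, y)) ⊆ insert s(a, b) T :=
        Finset.insert_subset_insert _ (Finset.erase_subset _ _)
      have hneX : (PenroseAux.sptrees (insert s(a, b) T)).Nonempty :=
        ⟨T, PenroseAux.mem_sptrees.mpr ⟨Finset.subset_insert _ _, hTtree⟩⟩
      obtain ⟨hmemX, hminX⟩ := PenroseAux.mst_spec hneX
      rw [hloc] at hminX
      have h1le : PenroseAux.W T ≤ PenroseAux.W (insert s(a, b) (T.erase s(x, y))) :=
        hminX _ (PenroseAux.mem_sptrees.mpr ⟨hT₁X, hT₁⟩)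
      have heE : s(a, b) ∉ T.erase s(x, y) := fun h => heT (Finset.mem_of_mem_erase h)
      have hs₁ : PenroseAux.W (insert s(a, b) (T.erase s(x, y)))
          = 2 ^ PenroseAux.w s(a, b) + PenroseAux.W (T.erase s(x, y)) := by
        simp only [PenroseAux.W]
        rw [Finset.sum_insert heE]
      have hs₁' : PenroseAux.W (T.erase s(x, y)) + 2 ^ PenroseAux.w s(x, y)
          = PenroseAux.W T :=
        Finset.sum_erase_add T (fun e => 2 ^ PenroseAux.w e) hfT
      have hwfwe : 2 ^ PenroseAux.w s(x, y) ≤ 2 ^ PenroseAux.w s(a, b) := by omega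
      have hw : PenroseAux.w s(x, y) = PenroseAux.w s(a, b) :=
        Nat.pow_right_injective (le_refl 2) (le_antisymm hwfwe hwewf)
      exact heT (show s(a, b) ∈ T from PenroseAux.w_inj hw ▸ hfT)
end

section
/- Let p ≥ 2 and let H* : T(ℕ_p) → {graphs on ℕ_p} be any map such that T ∩ H*(T) = ∅ for every tree T and G_c(ℕ_p) is the disjoint union over T ∈ T(ℕ_p) of the sets {H ∪ T : H ⊆ H*(T)}. Let 𝔅 be a commutative real Banach algebra with unit and let d_e ∈ 𝔅 be given for every edge e on ℕ_p. Then Σ_{G ∈ G_c(ℕ_p)} Π_{e ∈ G} (exp(d_e) − 1) = Σ_{T ∈ T(ℕ_p)} (Π_{e ∈ T} d_e) · ∫_{[0,1]^T} exp( Σ_{e ∈ H*(T)} d_e + Σ_{e ∈ T} s_e · d_e ) ds, where the integral is the Bochner integral over s = (s_e)_{e ∈ T} ∈ [0,1]^T with respect to Lebesgue measure, and exp denotes the exponential in 𝔅. -/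
open scoped Classical
open MeasureTheory

section Aux
open MeasureTheory.Measure NormedSpace

variable {𝔅 : Type*} [NormedCommRing 𝔅] [NormedAlgebra ℝ 𝔅] [CompleteSpace 𝔅]

noncomputable instance aux_normedAlgebraRat {𝔄 : Type*} [NormedCommRing 𝔄] [NormedAlgebra ℝ 𝔄] :
    NormedAlgebra ℚ 𝔄 :=
  NormedAlgebra.restrictScalars ℚ ℝ 𝔄

lemma aux_exp_integrableOn (a : 𝔅) :
    IntegrableOn (fun t : ℝ => exp (t • a)) (Set.Icc 0 1) volume :=
  ((exp_continuous).comp (continuous_id.smul continuous_const)).integrableOn_Icc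

lemma aux_one_dim (a : 𝔅) :
    a * ∫ t in Set.Icc (0:ℝ) 1, exp (t • a) = exp a - 1 := by
  have hint : IntervalIntegrable (fun t : ℝ => exp (t • a)) volume 0 1 :=
    ((exp_continuous).comp (continuous_id.smul continuous_const)).intervalIntegrable 0 1
  have h1 : (∫ t in Set.Icc (0:ℝ) 1, exp (t • a)) = ∫ t in (0:ℝ)..1, exp (t • a) := by
    rw [MeasureTheory.integral_Icc_eq_integral_Ioc, intervalIntegral.integral_of_le zero_le_one]
  have h2 : a * (∫ t in (0:ℝ)..1, exp (t • a)) = ∫ t in (0:ℝ)..1, a * exp (t • a) := by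
    have := (ContinuousLinearMap.mul ℝ 𝔅 a).intervalIntegral_comp_comm hint
    simpa using this.symm
  rw [h1, h2]
  have h3 : (∫ t in (0:ℝ)..1, a * exp (t • a)) = exp ((1:ℝ) • a) - exp ((0:ℝ) • a) := by
    refine intervalIntegral.integral_eq_sub_of_hasDerivAt
      (f := fun t : ℝ => exp (t • a)) (fun t _ => ?_) ?_
    · exact hasDerivAt_exp_smul_const' (𝕂 := ℝ) a t
    · exact hint.const_mul a
  rw [h3]
  simp [exp_zero]

variable {α β : Type*} [MeasurableSpace α] [MeasurableSpace β]
  {μ : Measure α} {ν : Measure β} [SigmaFinite μ] [SigmaFinite ν]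

set_option linter.unusedSectionVars false

lemma aux_integrable_prod_mul {f : α → 𝔅} {g : β → 𝔅} (hf : Integrable f μ)
    (hg : Integrable g ν) : Integrable (fun z : α × β => f z.1 * g z.2) (μ.prod ν) := by
  have hb : Integrable (fun z : α × β => ‖f z.1‖ * ‖g z.2‖) (μ.prod ν) :=
    hf.norm.mul_prod hg.norm
  refine hb.mono' (hf.1.comp_fst.fun_mul hg.1.comp_snd) ?_
  exact Filter.Eventually.of_forall fun z => by
    simpa using norm_mul_le (f z.1) (g z.2)

lemma aux_integral_prod_mul {f : α → 𝔅} {g : β → 𝔅} (hf : Integrable f μ)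
    (hg : Integrable g ν) :
    ∫ z, f z.1 * g z.2 ∂(μ.prod ν) = (∫ x, f x ∂μ) * ∫ y, g y ∂ν := by
  rw [MeasureTheory.integral_prod _ (aux_integrable_prod_mul hf hg)]
  have h1 : ∀ x, (∫ y, f x * g y ∂ν) = f x * ∫ y, g y ∂ν := fun x => by
    simpa using (ContinuousLinearMap.mul ℝ 𝔅 (f x)).integral_comp_comm hg
  simp_rw [h1]
  have h2 := ((ContinuousLinearMap.mul ℝ 𝔅).flip (∫ y, g y ∂ν)).integral_comp_comm hf
  simp only [ContinuousLinearMap.flip_apply, ContinuousLinearMap.mul_apply'] at h2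
  exact h2

lemma aux_integrable_fin_prod {n : ℕ} {μ : Fin n → Measure ℝ} [∀ i, SigmaFinite (μ i)]
    {f : Fin n → ℝ → 𝔅} (hf : ∀ i, Integrable (f i) (μ i)) :
    Integrable (fun x : Fin n → ℝ => ∏ i, f i (x i)) (Measure.pi μ) := by
  induction n with
  | zero =>
      simp only [Finset.univ_eq_empty, Finset.prod_empty]
      have : (Measure.pi μ) Set.univ = 1 := by simp [Measure.pi_univ]
      exact (integrable_const_iff).2 (Or.inr (by simp [this, isFiniteMeasure_iff]))
  | succ n n_ih =>
      have hmp := (measurePreserving_piFinSuccAbove μ 0).symm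
      rw [← hmp.integrable_comp_emb (MeasurableEquiv.measurableEmbedding _)]
      have h2 : Integrable (fun x : (j : Fin n) → ℝ => ∏ j, f (Fin.succ j) (x j))
          (Measure.pi fun j => μ (Fin.succ j)) := n_ih (fun i => hf _)
      have := aux_integrable_prod_mul (hf 0) h2
      refine this.congr ?_
      refine Filter.Eventually.of_forall fun z => ?_
      simp only [Function.comp_def, MeasurableEquiv.piFinSuccAbove_symm_apply,
        Fin.insertNthEquiv, Fin.prod_univ_succ, Fin.insertNth_zero, Equiv.coe_fn_mk,
        Fin.cons_zero, Fin.cons_succ, Fin.zero_succAbove, cast_eq]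

lemma aux_integral_fin_prod {n : ℕ} {μ : Fin n → Measure ℝ} [∀ i, SigmaFinite (μ i)]
    {f : Fin n → ℝ → 𝔅} (hf : ∀ i, Integrable (f i) (μ i)) :
    ∫ x : Fin n → ℝ, ∏ i, f i (x i) ∂(Measure.pi μ) = ∏ i, ∫ x, f i x ∂(μ i) := by
  induction n with
  | zero => simp [Measure.pi_univ, Measure.real]
  | succ n n_ih =>
      calc
        _ = ∫ z : ℝ × (Fin n → ℝ), f 0 z.1 * ∏ i : Fin n, f (Fin.succ i) (z.2 i)
            ∂((μ 0).prod (Measure.pi fun j => μ (Fin.succ j))) := by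
          rw [← ((measurePreserving_piFinSuccAbove μ 0).symm).integral_comp']
          congr 1
          ext z
          simp only [MeasurableEquiv.piFinSuccAbove_symm_apply, Fin.insertNthEquiv,
            Fin.prod_univ_succ, Fin.insertNth_zero, Equiv.coe_fn_mk,
            Fin.cons_zero, Fin.cons_succ, Fin.zero_succAbove, cast_eq]
        _ = (∫ x, f 0 x ∂(μ 0)) * ∏ i : Fin n, ∫ x, f (Fin.succ i) x ∂(μ (Fin.succ i)) := by
          rw [aux_integral_prod_mul (hf 0) (aux_integrable_fin_prod fun i => hf _),
            n_ih fun i => hf _]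
        _ = _ := by rw [Fin.prod_univ_succ]

lemma aux_integrable_fintype_prod {ι : Type*} [Fintype ι] {μ : ι → Measure ℝ}
    [∀ i, SigmaFinite (μ i)] {f : ι → ℝ → 𝔅} (hf : ∀ i, Integrable (f i) (μ i)) :
    Integrable (fun x : ι → ℝ => ∏ i, f i (x i)) (Measure.pi μ) := by
  let e := (Fintype.equivFin ι).symm
  rw [← (measurePreserving_piCongrLeft μ e).integrable_comp_emb
    (MeasurableEquiv.measurableEmbedding _) (g := fun x : ι → ℝ => ∏ i, f i (x i))]
  have := aux_integrable_fin_prod (μ := fun i' => μ (e i')) (f := fun i' => f (e i'))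
    (fun i => hf _)
  refine this.congr (Filter.Eventually.of_forall fun x => ?_)
  simp only [Function.comp_def, MeasurableEquiv.coe_piCongrLeft]
  rw [← e.prod_comp fun i => f i ((Equiv.piCongrLeft (fun _ => ℝ) e) x i)]
  simp [Equiv.piCongrLeft_apply_apply]

lemma aux_integral_fintype_prod {ι : Type*} [Fintype ι] {μ : ι → Measure ℝ}
    [∀ i, SigmaFinite (μ i)] {f : ι → ℝ → 𝔅} (hf : ∀ i, Integrable (f i) (μ i)) :
    ∫ x : ι → ℝ, ∏ i, f i (x i) ∂(Measure.pi μ) = ∏ i, ∫ x, f i x ∂(μ i) := by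
  let e := (Fintype.equivFin ι).symm
  rw [← (measurePreserving_piCongrLeft μ e).integral_comp'
    (g := fun x : ι → ℝ => ∏ i, f i (x i))]
  simp_rw [← e.prod_comp, MeasurableEquiv.coe_piCongrLeft, Equiv.piCongrLeft_apply_apply]
  exact (aux_integral_fin_prod fun i => hf _).trans rfl

lemma aux_restrict_pi {ι : Type*} [Fintype ι] :
    (volume : Measure (ι → ℝ)).restrict (Set.Icc 0 1)
      = Measure.pi (fun _ : ι => (volume : Measure ℝ).restrict (Set.Icc 0 1)) := by
  haveI : SigmaFinite ((volume : Measure ℝ).restrict (Set.Icc 0 1)) :=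
    Restrict.sigmaFinite _ _
  refine (Measure.pi_eq fun s hs => ?_).symm
  rw [← Set.pi_univ_Icc, Measure.restrict_apply (MeasurableSet.univ_pi hs)]
  simp only [Pi.zero_apply, Pi.one_apply]
  have : (Set.pi Set.univ s) ∩ (Set.pi Set.univ fun _ : ι => Set.Icc (0:ℝ) 1)
      = Set.pi Set.univ (fun i => s i ∩ Set.Icc 0 1) := by
    rw [← Set.pi_inter_distrib]
  rw [this, volume_pi_pi]
  congr 1
  ext i
  rw [Measure.restrict_apply (hs i)]

lemma aux_box (ι : Type*) [Fintype ι] (A : 𝔅) (c : ι → 𝔅) :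
    ∫ s in Set.Icc (0 : ι → ℝ) 1, exp (A + ∑ i, s i • c i)
      = exp A * ∏ i, ∫ t in Set.Icc (0:ℝ) 1, exp (t • c i) := by
  haveI : SigmaFinite ((volume : Measure ℝ).restrict (Set.Icc 0 1)) :=
    Restrict.sigmaFinite _ _
  have hint : ∀ i : ι, Integrable (fun t : ℝ => exp (t • c i))
      ((volume : Measure ℝ).restrict (Set.Icc 0 1)) := fun i => aux_exp_integrableOn (c i)
  have hF : Integrable (fun s : ι → ℝ => ∏ i, exp (s i • c i))
      (Measure.pi fun _ : ι => (volume : Measure ℝ).restrict (Set.Icc 0 1)) :=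
    aux_integrable_fintype_prod hint
  have h1 : (fun s : ι → ℝ => exp (A + ∑ i, s i • c i))
      = fun s : ι → ℝ => exp A * ∏ i, exp (s i • c i) := by
    funext s
    rw [exp_add, exp_sum]
  rw [MeasureTheory.integral_congr_ae (Filter.EventuallyEq.of_eq h1), aux_restrict_pi]
  have h2 := (ContinuousLinearMap.mul ℝ 𝔅 (exp A)).integral_comp_comm hF
  simp only [ContinuousLinearMap.mul_apply'] at h2
  rw [h2, aux_integral_fintype_prod hint]

end Aux

/-- **Interpolated tree expansion.**
Let `p ≥ 2`, let `H*` be any map from trees on `ℕ_p` to graphs on `ℕ_p` with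
`T ∩ H*(T) = ∅` and realizing the Penrose disjoint-union decomposition of connected
graphs, and let `d_e` be elements of a commutative unital real Banach algebra `𝔅` indexed
by edges.  Then
`∑_{G connected} ∏_{e ∈ G} (exp d_e − 1)
  = ∑_{T tree} (∏_{e ∈ T} d_e) ∫_{[0,1]^T} exp (∑_{e ∈ H*(T)} d_e + ∑_{e ∈ T} s_e d_e) ds`,
the integral being the Bochner integral over `s ∈ [0,1]^T` for Lebesgue measure. -/
theorem tree_resummation_exponential
    (𝔅 : Type*) [NormedCommRing 𝔅] [NormedAlgebra ℝ 𝔅] [CompleteSpace 𝔅]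
    (p : ℕ) (hp : 2 ≤ p)
    (Hstar : Finset (Sym2 (Fin p)) → Finset (Sym2 (Fin p)))
    (hgraph : ∀ T : Finset (Sym2 (Fin p)), IsTree T → IsGraphOn Finset.univ (Hstar T))
    (hdisj : ∀ T : Finset (Sym2 (Fin p)), IsTree T → T ∩ Hstar T = ∅)
    (hconn : ∀ T : Finset (Sym2 (Fin p)), IsTree T → ∀ H ⊆ Hstar T,
      IsGraphOn Finset.univ (H ∪ T) ∧ ConnectsOn Finset.univ (H ∪ T))
    (huniq : ∀ G : Finset (Sym2 (Fin p)),
      IsGraphOn Finset.univ G → ConnectsOn Finset.univ G →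
      ∃! T : Finset (Sym2 (Fin p)), IsTree T ∧ T ⊆ G ∧ G \ T ⊆ Hstar T)
    (d : Sym2 (Fin p) → 𝔅) :
    ∑ G ∈ Finset.univ.filter
        (fun G : Finset (Sym2 (Fin p)) =>
          IsGraphOn Finset.univ G ∧ ConnectsOn Finset.univ G),
      ∏ e ∈ G, (NormedSpace.exp (d e) - 1)
      = ∑ T ∈ Finset.univ.filter (fun T : Finset (Sym2 (Fin p)) => IsTree T),
          (∏ e ∈ T, d e) *
            ∫ s in Set.Icc (0 : { e // e ∈ T } → ℝ) 1,
              NormedSpace.exp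
                ((∑ e ∈ Hstar T, d e) + ∑ e : { e // e ∈ T }, s e • d (e : Sym2 (Fin p))) := by
  classical
  set f : Sym2 (Fin p) → 𝔅 := fun e => NormedSpace.exp (d e) - 1 with hf
  set s : Finset (Finset (Sym2 (Fin p))) := Finset.univ.filter
    (fun G : Finset (Sym2 (Fin p)) =>
      IsGraphOn Finset.univ G ∧ ConnectsOn Finset.univ G) with hs
  set tset : Finset (Finset (Sym2 (Fin p))) :=
    Finset.univ.filter (fun T : Finset (Sym2 (Fin p)) => IsTree T) with htset
  -- the RHS integral evaluation, tree by tree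
  have hRHS : ∀ T ∈ tset,
      (∏ e ∈ T, d e) *
          ∫ x in Set.Icc (0 : { e // e ∈ T } → ℝ) 1,
            NormedSpace.exp
              ((∑ e ∈ Hstar T, d e) + ∑ e : { e // e ∈ T }, x e • d (e : Sym2 (Fin p)))
        = (∏ e ∈ T, f e) * NormedSpace.exp (∑ e ∈ Hstar T, d e) := by
    intro T _
    rw [aux_box ({ e // e ∈ T }) (∑ e ∈ Hstar T, d e) (fun e => d (e : Sym2 (Fin p)))]
    have hdT : (∏ e ∈ T, d e) = ∏ e : { e // e ∈ T }, d (e : Sym2 (Fin p)) :=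
      (Finset.prod_coe_sort T d).symm
    have hfT : (∏ e ∈ T, f e) = ∏ e : { e // e ∈ T }, f (e : Sym2 (Fin p)) :=
      (Finset.prod_coe_sort T f).symm
    rw [hdT, hfT]
    rw [mul_comm (NormedSpace.exp (∑ e ∈ Hstar T, d e)), ← mul_assoc,
      ← Finset.prod_mul_distrib]
    congr 1
    exact Finset.prod_congr rfl fun e _ => aux_one_dim (d (e : Sym2 (Fin p)))
  rw [Finset.sum_congr rfl hRHS]
  -- now the combinatorial identity
  have hGmem : ∀ G ∈ s, IsGraphOn Finset.univ G ∧ ConnectsOn Finset.univ G := by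
    intro G hG
    simpa [hs, Finset.mem_filter] using hG
  -- the chosen tree of a connected graph
  set tr : ∀ G ∈ s, Finset (Sym2 (Fin p)) :=
    fun G hG => (huniq G (hGmem G hG).1 (hGmem G hG).2).choose with htr'
  have htr : ∀ (G) (hG : G ∈ s),
      (IsTree (tr G hG) ∧ tr G hG ⊆ G ∧ G \ tr G hG ⊆ Hstar (tr G hG)) ∧
        ∀ T', (IsTree T' ∧ T' ⊆ G ∧ G \ T' ⊆ Hstar T') → T' = tr G hG :=
    fun G hG => (huniq G (hGmem G hG).1 (hGmem G hG).2).choose_spec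
  have hdisj' : ∀ T H, IsTree T → H ⊆ Hstar T → Disjoint H T := by
    intro T H hT hH
    have : Disjoint T (Hstar T) := Finset.disjoint_iff_inter_eq_empty.2 (hdisj T hT)
    exact (this.mono_right hH).symm.mono_left le_rfl |>.symm.symm
  calc
    ∑ G ∈ s, ∏ e ∈ G, f e
        = ∑ P ∈ tset.sigma (fun T => (Hstar T).powerset), ∏ e ∈ (P.2 ∪ P.1), f e := by
      refine Finset.sum_bij' (fun G hG => ⟨tr G hG, G \ tr G hG⟩)
        (fun P _ => P.2 ∪ P.1) ?_ ?_ ?_ ?_ ?_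
      · intro G hG
        rw [Finset.mem_sigma]
        constructor
        · simp [htset, (htr G hG).1.1]
        · exact Finset.mem_powerset.2 (htr G hG).1.2.2
      · intro P hP
        rw [Finset.mem_sigma] at hP
        have hT : IsTree P.1 := by simpa [htset] using hP.1
        have hH : P.2 ⊆ Hstar P.1 := Finset.mem_powerset.1 hP.2
        have := hconn P.1 hT P.2 hH
        simp [hs, this.1, this.2]
      · intro G hG
        exact Finset.sdiff_union_of_subset (htr G hG).1.2.1
      · rintro ⟨T, H⟩ hP
        rw [Finset.mem_sigma] at hP
        have hT : IsTree T := by simpa [htset] using hP.1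
        have hH : H ⊆ Hstar T := Finset.mem_powerset.1 hP.2
        have hd : Disjoint H T := hdisj' T H hT hH
        have hc := hconn T hT H hH
        have hmem : H ∪ T ∈ s := by simp [hs, hc.1, hc.2]
        have h1 : tr (H ∪ T) hmem = T := by
          refine ((htr (H ∪ T) hmem).2 T ⟨hT, Finset.subset_union_right, ?_⟩).symm
          rw [Finset.union_sdiff_right]
          exact Finset.sdiff_subset.trans hH
        have h2 : (H ∪ T) \ tr (H ∪ T) hmem = H := by
          rw [h1, Finset.union_sdiff_right, Finset.sdiff_eq_self_iff_disjoint.2 hd]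
        exact Sigma.ext h1 (heq_of_eq h2)
      · intro G hG
        rw [Finset.sdiff_union_of_subset (htr G hG).1.2.1]
    _ = ∑ T ∈ tset, ∑ H ∈ (Hstar T).powerset, ∏ e ∈ (H ∪ T), f e := by
      rw [Finset.sum_sigma]
    _ = ∑ T ∈ tset, (∏ e ∈ T, f e) * NormedSpace.exp (∑ e ∈ Hstar T, d e) := by
      refine Finset.sum_congr rfl fun T hT' => ?_
      have hT : IsTree T := by simpa [htset] using hT'
      have h1 : ∀ H ∈ (Hstar T).powerset, ∏ e ∈ (H ∪ T), f e
          = (∏ e ∈ T, f e) * ∏ e ∈ H, f e := by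
        intro H hH
        rw [Finset.prod_union (hdisj' T H hT (Finset.mem_powerset.1 hH))]
        ring
      rw [Finset.sum_congr rfl h1, ← Finset.mul_sum]
      congr 1
      have h2 : ∑ H ∈ (Hstar T).powerset, ∏ e ∈ H, f e
          = ∏ e ∈ Hstar T, (f e + 1) := by
        rw [Finset.prod_add]
        exact Finset.sum_congr rfl fun H _ => by simp
      rw [h2]
      have h3 : ∀ e, f e + 1 = NormedSpace.exp (d e) := by intro e; simp [hf]
      rw [Finset.prod_congr rfl fun e _ => h3 e, NormedSpace.exp_sum]
end

section
/- Let p ≥ 1 and let M be a p × p real symmetric positive semidefinite matrix with diagonal elements M_{qq} ≤ 1 for all q ∈ ℕ_p. Let X be a finite set and let C : X × X → ℝ be a Gram matrix with Gram constant γ, i.e. C(x,y) = ⟪f_x, g_y⟫ for vectors f_x, g_y in a real inner product space with ‖f_x‖ ≤ γ and ‖g_y‖ ≤ γ for all x, y ∈ X. Then the matrix Γ with rows and columns indexed by ℕ_p × X defined by Γ((q,x),(q',x')) = M_{qq'} · C(x,x') is a Gram matrix with Gram constant γ. -/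
/-- `A` (rows indexed by `I`, columns indexed by `J`) is a Gram matrix with Gram constant
`α`: there are a real inner product space `H` and vectors `f i`, `g j` of norm at most `α`
with `A i j = ⟪f i, g j⟫`. -/
def IsGram {I J : Type*} (A : I → J → ℝ) (α : ℝ) : Prop :=
  ∃ (H : Type) (_ : NormedAddCommGroup H) (_ : InnerProductSpace ℝ H)
    (f : I → H) (g : J → H),
    (∀ i, ‖f i‖ ≤ α) ∧ (∀ j, ‖g j‖ ≤ α) ∧ ∀ i j, A i j = inner ℝ (f i) (g j)

/-- **Uniform Gram constants from positivity.**
Let `M` be a `p × p` real symmetric positive semidefinite matrix with diagonal entries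
`M q q ≤ 1`, let `X` be a finite set, and let `C : X × X → ℝ` be a Gram matrix with Gram
constant `γ`.  Then the matrix `Γ((q,x),(q',x')) = M q q' * C x x'` on `ℕ_p × X` is a
Gram matrix with Gram constant `γ`. -/
theorem gram_tensor_posSemidef
    (p : ℕ) (hp : 1 ≤ p) (M : Matrix (Fin p) (Fin p) ℝ)
    (hM : M.PosSemidef) (hdiag : ∀ q, M q q ≤ 1)
    (X : Type*) [Fintype X] (C : X → X → ℝ) (γ : ℝ) (hC : IsGram C γ) :
    IsGram (fun (a b : Fin p × X) => M a.1 b.1 * C a.2 b.2) γ := by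
  obtain ⟨H, _, _, f, g, hf, hg, hfg⟩ := hC
  open scoped MatrixOrder in
  set S := CFC.sqrt M with hS
  have hSsym : ∀ q r, S q r = S r q := fun q r => by
    open scoped MatrixOrder in
    have := (Matrix.nonneg_iff_posSemidef.mp (CFC.sqrt_nonneg M)).isHermitian
    simpa [Matrix.IsHermitian] using congrFun (congrFun this.symm q) r
  have hSS : ∀ q q', (∑ r, S r q * S r q') = M q q' := by
    intro q q'
    open scoped MatrixOrder in
    have h := congrFun (congrFun (CFC.sqrt_mul_sqrt_self M hM.nonneg) q) q'
    simp only [Matrix.mul_apply, ← hS] at h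
    rw [← h]
    exact Finset.sum_congr rfl fun r _ => by rw [hSsym]
  refine ⟨PiLp 2 (fun _ : Fin p => H), inferInstance, inferInstance,
    fun a => (WithLp.equiv 2 _).symm fun r => S r a.1 • f a.2,
    fun b => (WithLp.equiv 2 _).symm fun r => S r b.1 • g b.2, ?_, ?_, ?_⟩
  · rintro ⟨q, x⟩
    have hγ : ‖f x‖ ≤ γ := hf x
    have hnn : (0:ℝ) ≤ γ := le_trans (norm_nonneg _) hγ
    have h1 : ‖((WithLp.equiv 2 _).symm fun r => S r q • f x : PiLp 2 (fun _ : Fin p => H))‖ ^ 2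
        = M q q * ‖f x‖ ^ 2 := by
      rw [← real_inner_self_eq_norm_sq, PiLp.inner_apply]
      simp only [WithLp.equiv_symm_apply, PiLp.toLp_apply, real_inner_smul_left, real_inner_smul_right,
        real_inner_self_eq_norm_sq]
      rw [← hSS q q, Finset.sum_mul]
      exact Finset.sum_congr rfl fun r _ => by
        rw [norm_smul, mul_pow, Real.norm_eq_abs, sq_abs]; ring
    have h2 : ‖((WithLp.equiv 2 _).symm fun r => S r q • f x : PiLp 2 (fun _ : Fin p => H))‖ ^ 2
        ≤ γ ^ 2 := by
      rw [h1]
      calc M q q * ‖f x‖ ^ 2 ≤ 1 * γ ^ 2 :=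
            mul_le_mul (hdiag q) (by nlinarith [norm_nonneg (f x)]) (by positivity) zero_le_one
        _ = γ ^ 2 := one_mul _
    nlinarith [norm_nonneg ((WithLp.equiv 2 _).symm fun r => S r q • f x : PiLp 2 (fun _ : Fin p => H))]
  · rintro ⟨q, x⟩
    have hγ : ‖g x‖ ≤ γ := hg x
    have hnn : (0:ℝ) ≤ γ := le_trans (norm_nonneg _) hγ
    have h1 : ‖((WithLp.equiv 2 _).symm fun r => S r q • g x : PiLp 2 (fun _ : Fin p => H))‖ ^ 2
        = M q q * ‖g x‖ ^ 2 := by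
      rw [← real_inner_self_eq_norm_sq, PiLp.inner_apply]
      simp only [WithLp.equiv_symm_apply, PiLp.toLp_apply, real_inner_smul_left, real_inner_smul_right,
        real_inner_self_eq_norm_sq]
      rw [← hSS q q, Finset.sum_mul]
      exact Finset.sum_congr rfl fun r _ => by
        rw [norm_smul, mul_pow, Real.norm_eq_abs, sq_abs]; ring
    have h2 : ‖((WithLp.equiv 2 _).symm fun r => S r q • g x : PiLp 2 (fun _ : Fin p => H))‖ ^ 2
        ≤ γ ^ 2 := by
      rw [h1]
      calc M q q * ‖g x‖ ^ 2 ≤ 1 * γ ^ 2 :=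
            mul_le_mul (hdiag q) (by nlinarith [norm_nonneg (g x)]) (by positivity) zero_le_one
        _ = γ ^ 2 := one_mul _
    nlinarith [norm_nonneg ((WithLp.equiv 2 _).symm fun r => S r q • g x : PiLp 2 (fun _ : Fin p => H))]
  · rintro ⟨q, x⟩ ⟨q', x'⟩
    simp only [PiLp.inner_apply, WithLp.equiv_symm_apply, PiLp.toLp_apply, real_inner_smul_left,
      real_inner_smul_right]
    rw [← hfg, ← hSS q q', Finset.sum_mul]
    exact Finset.sum_congr rfl fun r _ => by ring
end

section
/- Let p ≥ 1, let M be a p × p real matrix, let A ⊆ ℕ_p and s ∈ [0,1], and let M^{(A,s)} be the matrix with (M^{(A,s)})_{qq'} = s·M_{qq'} if exactly one of q, q' lies in A and (M^{(A,s)})_{qq'} = M_{qq'} otherwise. Then the diagonal elements are unchanged, (M^{(A,s)})_{qq} = M_{qq} for all q ∈ ℕ_p, and if M is symmetric positive semidefinite then M^{(A,s)} is also symmetric positive semidefinite. -/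
/-- The interpolated matrix `M^{(A,s)}`: the entry `M q q'` is multiplied by `s` if
exactly one of `q, q'` lies in `A`, and is unchanged otherwise. -/
def interpMatrix {p : ℕ} (M : Matrix (Fin p) (Fin p) ℝ) (A : Finset (Fin p)) (s : ℝ) :
    Matrix (Fin p) (Fin p) ℝ :=
  Matrix.of fun q q' =>
    if (q ∈ A ∧ q' ∉ A) ∨ (q ∉ A ∧ q' ∈ A) then s * M q q' else M q q'

lemma psd_smul {n : Type*} [Fintype n] {N : Matrix n n ℝ} (h : N.PosSemidef)
    {c : ℝ} (hc : 0 ≤ c) : (c • N).PosSemidef := by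
  refine ⟨?_, fun x => ?_⟩
  · show (c • N).conjTranspose = c • N
    rw [Matrix.conjTranspose_smul, h.1]
    norm_num
  · exact (h.smul hc).2 x

/-- **Decoupling preserves positivity and the diagonal.**
Let `M` be a `p × p` real matrix, `A ⊆ ℕ_p`, `s ∈ [0,1]`.  Then the diagonal entries of
`M^{(A,s)}` coincide with those of `M`, and if `M` is symmetric positive semidefinite
then so is `M^{(A,s)}`. -/
theorem interpMatrix_diag_and_posSemidef
    (p : ℕ) (hp : 1 ≤ p) (M : Matrix (Fin p) (Fin p) ℝ) (A : Finset (Fin p))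
    (s : ℝ) (hs0 : 0 ≤ s) (hs1 : s ≤ 1) :
    (∀ q, interpMatrix M A s q q = M q q) ∧
    (M.PosSemidef → (interpMatrix M A s).PosSemidef) := by
  constructor
  · intro q
    simp [interpMatrix]
  · intro hM
    set d : Fin p → ℝ := fun q => if q ∈ A then (-1 : ℝ) else 1 with hd
    set D : Matrix (Fin p) (Fin p) ℝ := Matrix.diagonal d with hD
    have key : interpMatrix M A s = ((1 + s) / 2) • M + ((1 - s) / 2) • (D * M * D) := by
      ext q q'
      have hDMD : (D * M * D) q q' = d q * M q q' * d q' := by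
        simp [hD, Matrix.diagonal_mul, Matrix.mul_diagonal]
      simp only [interpMatrix, Matrix.of_apply, Matrix.add_apply, Matrix.smul_apply,
        smul_eq_mul, hDMD, hd]
      by_cases h1 : q ∈ A <;> by_cases h2 : q' ∈ A <;> simp [h1, h2] <;> ring
    rw [key]
    have h1 : (0:ℝ) ≤ (1 + s) / 2 := by linarith
    have h2 : (0:ℝ) ≤ (1 - s) / 2 := by linarith
    have hDH : D.conjTranspose = D := by
      ext i j
      simp [hD, Matrix.conjTranspose_apply, Matrix.diagonal, hd]
      split <;> split <;> simp_all
    have hpsd := hM.mul_mul_conjTranspose_same D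
    rw [hDH] at hpsd
    exact (psd_smul hM h1).add (psd_smul hpsd h2)
end

section
/- Let p ≥ 1, let 𝔅 be a commutative real Banach algebra with unit, let Δ_{qq'} ∈ 𝔅 be given for all q, q' ∈ ℕ_p, let M be a p × p real symmetric matrix, and let A ⊆ Q ⊆ ℕ_p. Then exp(Δ_Q[M]) = exp(Δ_A[M]) · exp(Δ_{Q∖A}[M]) + Σ_{q ∈ Q∖A} Δ̃_{A,q}[M] · ∫_0^1 exp(Δ_Q[M^{(A,s)}]) ds, where the integral is the Bochner integral over s ∈ [0,1]. -/
/-- `Δ_Q[M] = ∑_{q, q' ∈ Q} M q q' • Δ q q'`. -/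
def DeltaQ {p : ℕ} {𝔅 : Type*} [AddCommMonoid 𝔅] [Module ℝ 𝔅]
    (Δ : Fin p → Fin p → 𝔅) (M : Matrix (Fin p) (Fin p) ℝ) (Q : Finset (Fin p)) : 𝔅 :=
  ∑ q ∈ Q, ∑ q' ∈ Q, M q q' • Δ q q'

/-- `Δ̃_{A,q}[M] = ∑_{q' ∈ A} M q' q • (Δ q' q + Δ q q')`. -/
def DeltaTilde {p : ℕ} {𝔅 : Type*} [AddCommMonoid 𝔅] [Module ℝ 𝔅]
    (Δ : Fin p → Fin p → 𝔅) (M : Matrix (Fin p) (Fin p) ℝ)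
    (A : Finset (Fin p)) (q : Fin p) : 𝔅 :=
  ∑ q' ∈ A, M q' q • (Δ q' q + Δ q q')

/-- **The basic interpolation (decoupling) step.**
Let `𝔅` be a commutative unital real Banach algebra, `Δ q q' ∈ 𝔅`, `M` a `p × p` real
symmetric matrix, and `A ⊆ Q ⊆ ℕ_p`.  Then
`exp (Δ_Q[M]) = exp (Δ_A[M]) * exp (Δ_{Q∖A}[M])
  + ∑_{q ∈ Q∖A} Δ̃_{A,q}[M] * ∫_0^1 exp (Δ_Q[M^{(A,s)}]) ds`. -/
theorem decoupling_step
    (𝔅 : Type*) [NormedCommRing 𝔅] [NormedAlgebra ℝ 𝔅] [CompleteSpace 𝔅]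
    (p : ℕ) (hp : 1 ≤ p) (Δ : Fin p → Fin p → 𝔅)
    (M : Matrix (Fin p) (Fin p) ℝ) (hM : M.IsSymm)
    (A Q : Finset (Fin p)) (hAQ : A ⊆ Q) :
    NormedSpace.exp (DeltaQ Δ M Q)
      = NormedSpace.exp (DeltaQ Δ M A) * NormedSpace.exp (DeltaQ Δ M (Q \ A))
        + ∑ q ∈ Q \ A, DeltaTilde Δ M A q *
            ∫ s in (0:ℝ)..1, NormedSpace.exp (DeltaQ Δ (interpMatrix M A s) Q) := by
  classical
  letI : NormedAlgebra ℚ 𝔅 := NormedAlgebra.restrictScalars ℚ ℝ 𝔅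
  set X : 𝔅 := DeltaQ Δ M A + DeltaQ Δ M (Q \ A) with hXdef
  set C : 𝔅 := ∑ q ∈ Q \ A, DeltaTilde Δ M A q with hCdef
  have hu : A ∪ (Q \ A) = Q := Finset.union_sdiff_of_subset hAQ
  have hd : Disjoint A (Q \ A) := Finset.disjoint_sdiff
  -- split any DeltaQ over Q into four pieces
  have hsplit : ∀ (N : Matrix (Fin p) (Fin p) ℝ),
      DeltaQ Δ N Q = (∑ q ∈ A, ∑ q' ∈ A, N q q' • Δ q q')
        + (∑ q ∈ A, ∑ q' ∈ Q \ A, N q q' • Δ q q')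
        + (∑ q ∈ Q \ A, ∑ q' ∈ A, N q q' • Δ q q')
        + (∑ q ∈ Q \ A, ∑ q' ∈ Q \ A, N q q' • Δ q q') := by
    intro N
    unfold DeltaQ
    conv_lhs => rw [← hu]
    rw [Finset.sum_union hd]
    simp only [Finset.sum_union hd, Finset.sum_add_distrib]
    abel
  -- expansion of C
  have hC : C = (∑ q ∈ A, ∑ q' ∈ Q \ A, M q q' • Δ q q')
      + (∑ q ∈ Q \ A, ∑ q' ∈ A, M q q' • Δ q q') := by
    rw [hCdef]
    unfold DeltaTilde
    simp only [smul_add, Finset.sum_add_distrib]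
    congr 1
    · rw [Finset.sum_comm]
    · refine Finset.sum_congr rfl fun a ha => Finset.sum_congr rfl fun b hb => ?_
      rw [← hM.apply b a]
  -- key identity
  have key : ∀ s : ℝ, DeltaQ Δ (interpMatrix M A s) Q = X + s • C := by
    intro s
    rw [hsplit, hC, hXdef]
    have h1 : ∑ q ∈ A, ∑ q' ∈ A, (interpMatrix M A s) q q' • Δ q q'
        = DeltaQ Δ M A := by
      refine Finset.sum_congr rfl fun a ha => Finset.sum_congr rfl fun b hb => ?_
      simp [interpMatrix, ha, hb]
    have h4 : ∑ q ∈ Q \ A, ∑ q' ∈ Q \ A, (interpMatrix M A s) q q' • Δ q q'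
        = DeltaQ Δ M (Q \ A) := by
      refine Finset.sum_congr rfl fun a ha => Finset.sum_congr rfl fun b hb => ?_
      simp [interpMatrix, (Finset.mem_sdiff.1 ha).2, (Finset.mem_sdiff.1 hb).2]
    have h2 : ∑ q ∈ A, ∑ q' ∈ Q \ A, (interpMatrix M A s) q q' • Δ q q'
        = s • ∑ q ∈ A, ∑ q' ∈ Q \ A, M q q' • Δ q q' := by
      rw [Finset.smul_sum]
      refine Finset.sum_congr rfl fun a ha => ?_
      rw [Finset.smul_sum]
      refine Finset.sum_congr rfl fun b hb => ?_
      simp [interpMatrix, ha, (Finset.mem_sdiff.1 hb).2, mul_smul]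
    have h3 : ∑ q ∈ Q \ A, ∑ q' ∈ A, (interpMatrix M A s) q q' • Δ q q'
        = s • ∑ q ∈ Q \ A, ∑ q' ∈ A, M q q' • Δ q q' := by
      rw [Finset.smul_sum]
      refine Finset.sum_congr rfl fun a ha => ?_
      rw [Finset.smul_sum]
      refine Finset.sum_congr rfl fun b hb => ?_
      simp [interpMatrix, hb, (Finset.mem_sdiff.1 ha).2, mul_smul]
    rw [h1, h2, h3, h4, smul_add]
    abel
  -- the interpolated function
  set f : ℝ → 𝔅 := fun s => NormedSpace.exp (X + s • C) with hf
  have hderiv : ∀ s : ℝ, HasDerivAt f (C * f s) s := by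
    intro s
    have h1 : ∀ u : ℝ, f u = NormedSpace.exp X * NormedSpace.exp (u • C) := by
      intro u; rw [hf]; exact NormedSpace.exp_add
    have h2 : HasDerivAt (fun u : ℝ => NormedSpace.exp (u • C))
        (C * NormedSpace.exp (s • C)) s := hasDerivAt_exp_smul_const' C s
    have h3 := h2.const_mul (NormedSpace.exp X)
    have h4 : HasDerivAt f (NormedSpace.exp X * (C * NormedSpace.exp (s • C))) s := by
      refine h3.congr_of_eventuallyEq ?_
      filter_upwards with u using (h1 u)
    have : NormedSpace.exp X * (C * NormedSpace.exp (s • C)) = C * f s := by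
      rw [h1 s]; ring
    rwa [this] at h4
  have hfc : Continuous f := by
    apply NormedSpace.exp_continuous.comp
    exact continuous_const.add (continuous_id.smul continuous_const)
  have hint : IntervalIntegrable f MeasureTheory.volume 0 1 :=
    hfc.intervalIntegrable 0 1
  have hint' : IntervalIntegrable (fun s => C * f s) MeasureTheory.volume 0 1 :=
    (continuous_const.mul hfc).intervalIntegrable 0 1
  have ftc : ∫ s in (0:ℝ)..1, C * f s = f 1 - f 0 :=
    intervalIntegral.integral_eq_sub_of_hasDerivAt (fun t _ => hderiv t) hint'
  have hmul : ∫ s in (0:ℝ)..1, C * f s = C * ∫ s in (0:ℝ)..1, f s := by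
    have := ContinuousLinearMap.intervalIntegral_comp_comm (ContinuousLinearMap.mul ℝ 𝔅 C) hint
    simpa using this
  have hM1 : interpMatrix M A 1 = M := by
    ext q q'
    simp [interpMatrix]
  have hf1 : f 1 = NormedSpace.exp (DeltaQ Δ M Q) := by
    rw [hf]
    simp only [← key 1, hM1]
  have hf0 : f 0 = NormedSpace.exp (DeltaQ Δ M A) * NormedSpace.exp (DeltaQ Δ M (Q \ A)) := by
    rw [hf]
    simp only [zero_smul, add_zero, hXdef]
    exact NormedSpace.exp_add
  have hif : (∫ s in (0:ℝ)..1, NormedSpace.exp (DeltaQ Δ (interpMatrix M A s) Q))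
      = ∫ s in (0:ℝ)..1, f s := by
    refine intervalIntegral.integral_congr fun s _ => ?_
    rw [hf, key s]
  rw [hif, ← Finset.sum_mul, ← hCdef, ← hmul, ftc, hf1, hf0]
  abel
end

section
/- Let p ≥ 1, let M be a p × p real symmetric positive semidefinite matrix, let q_1, …, q_r be distinct elements of ℕ_p, set A_0 = ∅ and A_w = {q_1,…,q_w} for 1 ≤ w ≤ r, let s_1, …, s_{r−1} ∈ [0,1], and define recursively M_1 = M and M_{w+1} = (M_w)^{(A_w, s_w)} for 1 ≤ w ≤ r−1. Then for every w ∈ {1,…,r}: (i) M_w is real symmetric positive semidefinite; (ii) (M_w)_{qq} = M_{qq} for all q ∈ ℕ_p; and (iii) (M_w)_{qq'} = M_{qq'} whenever both q ∉ A_{w−1} and q' ∉ A_{w−1}. -/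
open scoped Matrix

lemma psd_smul_s15 {n : ℕ} {M : Matrix (Fin n) (Fin n) ℝ} {c : ℝ} (hc : 0 ≤ c)
    (h : M.PosSemidef) : (c • M).PosSemidef := by
  rw [Matrix.posSemidef_iff_dotProduct_mulVec]
  refine ⟨?_, fun x => ?_⟩
  · unfold Matrix.IsHermitian
    rw [Matrix.conjTranspose_smul, h.1]
    simp
  · simp only [star_trivial] at *
    rw [Matrix.smul_mulVec, dotProduct_smul]
    exact mul_nonneg hc (by simpa using h.dotProduct_mulVec_nonneg x)

lemma psd_add {n : ℕ} {M N : Matrix (Fin n) (Fin n) ℝ}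
    (h1 : M.PosSemidef) (h2 : N.PosSemidef) : (M + N).PosSemidef := by
  refine Matrix.posSemidef_iff_dotProduct_mulVec.mpr ⟨h1.1.add h2.1, fun x => ?_⟩
  rw [Matrix.add_mulVec, dotProduct_add]
  exact add_nonneg (h1.dotProduct_mulVec_nonneg x) (h2.dotProduct_mulVec_nonneg x)

lemma interp_psd {p : ℕ} (M : Matrix (Fin p) (Fin p) ℝ) (A : Finset (Fin p)) (s : ℝ)
    (hM : M.PosSemidef) (hs : s ∈ Set.Icc (0:ℝ) 1) :
    (interpMatrix M A s).PosSemidef := by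
  set D : Matrix (Fin p) (Fin p) ℝ :=
    Matrix.diagonal (fun i => if i ∈ A then (1:ℝ) else -1) with hD
  have hcong : (D * M * Dᴴ).PosSemidef := hM.mul_mul_conjTranspose_same D
  have key : interpMatrix M A s = ((1+s)/2) • M + ((1-s)/2) • (D * M * Dᴴ) := by
    ext i j
    have hDH : Dᴴ = D := by
      simp [hD, Matrix.diagonal_conjTranspose]
    rw [hDH]
    have hij : (D * M * D) i j
        = (if i ∈ A then (1:ℝ) else -1) * M i j * (if j ∈ A then (1:ℝ) else -1) := by
      simp [hD, Matrix.diagonal_mul, Matrix.mul_diagonal, mul_comm, mul_assoc]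
    simp only [Matrix.add_apply, Matrix.smul_apply, hij, smul_eq_mul, interpMatrix,
      Matrix.of_apply]
    by_cases hi : i ∈ A <;> by_cases hj : j ∈ A <;> simp [hi, hj] <;> ring
  rw [key]
  exact psd_add (psd_smul_s15 (by linarith [hs.1] : (0:ℝ) ≤ (1+s)/2) hM)
    (psd_smul_s15 (by linarith [hs.2] : (0:ℝ) ≤ (1-s)/2) hcong)

lemma interp_diag {p : ℕ} (M : Matrix (Fin p) (Fin p) ℝ) (A : Finset (Fin p)) (s : ℝ)
    (a : Fin p) : interpMatrix M A s a a = M a a := by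
  simp only [interpMatrix, Matrix.of_apply]
  rw [if_neg]; tauto

lemma interp_off {p : ℕ} (M : Matrix (Fin p) (Fin p) ℝ) (A : Finset (Fin p)) (s : ℝ)
    {a b : Fin p} (ha : a ∉ A) (hb : b ∉ A) : interpMatrix M A s a b = M a b := by
  simp only [interpMatrix, Matrix.of_apply]
  rw [if_neg]; tauto

/-- **Iterated decoupling preserves positivity, the diagonal, and the untouched block.**
Let `M` be a `p × p` real symmetric positive semidefinite matrix, let `q 1, …, q r` be
distinct elements of `ℕ_p` (i.e. `Fin p`), set `A w = {q 1, …, q w}` (so `A 0 = ∅`),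
let `s 1, …, s (r-1) ∈ [0,1]`, and define recursively `Mseq 1 = M` and
`Mseq (w+1) = (Mseq w)^{(A w, s w)}` for `1 ≤ w ≤ r − 1`.  Then for every
`w ∈ {1, …, r}`: (i) `Mseq w` is symmetric positive semidefinite; (ii) the diagonal of
`Mseq w` equals that of `M`; and (iii) `(Mseq w) a b = M a b` whenever
`a ∉ A (w−1)` and `b ∉ A (w−1)`. -/
theorem iterated_decoupling_properties
    (p r : ℕ) (hp : 1 ≤ p) (hr : 1 ≤ r)
    (M : Matrix (Fin p) (Fin p) ℝ) (hM : M.PosSemidef)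
    (q : ℕ → Fin p)
    (hq : ∀ i j, 1 ≤ i → i ≤ r → 1 ≤ j → j ≤ r → q i = q j → i = j)
    (s : ℕ → ℝ) (hs : ∀ w, 1 ≤ w → w ≤ r - 1 → s w ∈ Set.Icc (0:ℝ) 1)
    (A : ℕ → Finset (Fin p)) (hA : ∀ w, A w = (Finset.Icc 1 w).image q)
    (Mseq : ℕ → Matrix (Fin p) (Fin p) ℝ)
    (hM1 : Mseq 1 = M)
    (hrec : ∀ w, 1 ≤ w → w ≤ r - 1 → Mseq (w + 1) = interpMatrix (Mseq w) (A w) (s w)) :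
    ∀ w, 1 ≤ w → w ≤ r →
      (Mseq w).PosSemidef ∧
      (∀ a : Fin p, Mseq w a a = M a a) ∧
      (∀ a b : Fin p, a ∉ A (w - 1) → b ∉ A (w - 1) → Mseq w a b = M a b) := by
  intro w
  induction w with
  | zero => intro h; omega
  | succ n ih =>
    intro _ hle
    rcases Nat.eq_zero_or_pos n with h0 | h1
    · subst h0
      rw [hM1]
      exact ⟨hM, fun a => rfl, fun a b _ _ => rfl⟩
    · have hnr1 : n ≤ r - 1 := by omega
      have hrec' := hrec n h1 hnr1
      have IH := ih h1 (by omega)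
      have hsub : A (n - 1) ⊆ A n := by
        rw [hA, hA]
        exact Finset.image_subset_image (Finset.Icc_subset_Icc_right (by omega))
      have hAn : A (n + 1 - 1) = A n := by norm_num
      refine ⟨?_, ?_, ?_⟩
      · rw [hrec']
        exact interp_psd _ _ _ IH.1 (hs n h1 hnr1)
      · intro a
        rw [hrec', interp_diag]
        exact IH.2.1 a
      · intro a b ha hb
        rw [hAn] at ha hb
        rw [hrec', interp_off _ _ _ ha hb]
        exact IH.2.2 a b (fun h => ha (hsub h)) (fun h => hb (hsub h))
end
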